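/- arXiv:1111.2902 — 6 statements merged into one kernel-verified Lean document; each statement's English description precedes it below -/
import Mathlib

section
/- Let R be a local ring and let 0 → L → M → N → 0 be a short exact sequence of finitely generated R-modules. Then min(depth L, depth N) = min(depth M, depth N). -/
open CategoryTheory IsLocalRing

universe u

section Prelim

variable (R : Type u) [CommRing R]

/-- The depth of a module over a local ring: the supremum of the lengths of
(weakly) regular sequences on `M` consisting of elements of the maximal ideal. -/
noncomputable def mdepth [IsLocalRing R] (M : Type u) [AddCommGroup M] [Module R M] : ℕ∞ :=
  sSup {n : ℕ∞ | ∃ rs : List R, (rs.length : ℕ∞) = n ∧ (∀ r ∈ rs, r ∈ maximalIdeal R) ∧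
    RingTheory.Sequence.IsWeaklyRegular M rs}

/-- A short exact sequence `0 → L → M → N → 0` of `R`-modules. -/
def SES (L M N : ModuleCat.{u} R) : Prop :=
  ∃ (f : L →ₗ[R] M) (g : M →ₗ[R] N),
    Function.Injective f ∧ Function.Surjective g ∧ LinearMap.ker g = LinearMap.range f

/-- `N` is a direct summand of `M`. -/
def IsSummand (N M : ModuleCat.{u} R) : Prop :=
  ∃ (i : N →ₗ[R] M) (p : M →ₗ[R] N), p.comp i = LinearMap.id

/-- `N` is a (minimal) first syzygy of `M`: the kernel of a minimal free cover of `M`. -/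
def IsSyzygy (M N : ModuleCat.{u} R) : Prop :=
  ∃ (n : ℕ) (f : (Fin n → R) →ₗ[R] M), Function.Surjective f ∧
    LinearMap.ker f ≤ ((⊥ : Ideal R).jacobson) • (⊤ : Submodule R (Fin n → R)) ∧
    Nonempty (N ≃ₗ[R] LinearMap.ker f)

/-- `N` is an `n`-th (minimal) syzygy of `M`. -/
def IsNSyzygy : ℕ → ModuleCat.{u} R → ModuleCat.{u} R → Prop
  | 0, M, N => Nonempty (N ≃ₗ[R] M)
  | n + 1, M, N => ∃ K : ModuleCat.{u} R, IsSyzygy R M K ∧ IsNSyzygy n K N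

/-- The additive closure of a class of modules: closure under finite direct sums
and direct summands. -/
inductive AddClosure (T : Set (ModuleCat.{u} R)) : ModuleCat.{u} R → Prop
  | of {M : ModuleCat.{u} R} : M ∈ T → AddClosure T M
  | prod {M N : ModuleCat.{u} R} : AddClosure T M → AddClosure T N →
      AddClosure T (ModuleCat.of R (M × N))
  | summand {M N : ModuleCat.{u} R} : AddClosure T M → IsSummand R N M → AddClosure T N

/-- `[X]`: the additive closure of `{R} ∪ {Ω^i X : i ≥ 0, X ∈ X}`. -/
def bracket (X : Set (ModuleCat.{u} R)) : Set (ModuleCat.{u} R) :=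
  {M | AddClosure R (insert (ModuleCat.of R R)
    {N | ∃ M₀ ∈ X, ∃ i : ℕ, IsNSyzygy R i M₀ N}) M}

/-- `X ∘ Y`: modules `M` fitting in an exact sequence `0 → X → M → Y → 0`. -/
def circOp (X Y : Set (ModuleCat.{u} R)) : Set (ModuleCat.{u} R) :=
  {M | ∃ X₀ ∈ X, ∃ Y₀ ∈ Y, SES R X₀ M Y₀}

/-- `X • Y = [[X] ∘ [Y]]`. -/
def bull (X Y : Set (ModuleCat.{u} R)) : Set (ModuleCat.{u} R) :=
  bracket R (circOp R (bracket R X) (bracket R Y))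

/-- The ball `[C]_r` of radius `r` centered at `C`. -/
def ball (C : ModuleCat.{u} R) : ℕ → Set (ModuleCat.{u} R)
  | 0 => ∅
  | 1 => bracket R {C}
  | r + 2 => bracket R (circOp R (ball C (r + 1)) (bracket R {C}))

/-- A resolving subcategory of `mod R`. -/
def IsResolving (X : Set (ModuleCat.{u} R)) : Prop :=
  (∀ M ∈ X, Module.Finite R M) ∧
  (ModuleCat.of R R ∈ X) ∧
  (∀ M ∈ X, ∀ N : ModuleCat.{u} R, IsSummand R N M → N ∈ X) ∧
  (∀ L M N : ModuleCat.{u} R, SES R L M N → L ∈ X → N ∈ X → M ∈ X) ∧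
  (∀ L M N : ModuleCat.{u} R, SES R L M N → M ∈ X → N ∈ X → L ∈ X)

end Prelim

section Prelim2

variable (R : Type u) [CommRing R]

/-- The Ext module `Ext^n_R(M, N)`. -/
noncomputable def extM (M N : ModuleCat.{u} R) (n : ℕ) : ModuleCat.{u} R :=
  ((Ext R (ModuleCat.{u} R) n).obj (Opposite.op M)).obj N

/-- A finitely generated module `M` is totally reflexive if `M → M**` is bijective and
`Ext^i(M, R) = 0 = Ext^i(M*, R)` for all `i > 0`. -/
def TotallyReflexive (M : Type u) [AddCommGroup M] [Module R M] : Prop :=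
  Module.Finite R M ∧
  Function.Bijective (Module.Dual.eval R M) ∧
  (∀ i : ℕ, 0 < i →
    Subsingleton (extM R (ModuleCat.of R M) (ModuleCat.of R R) i)) ∧
  (∀ i : ℕ, 0 < i →
    Subsingleton (extM R (ModuleCat.of R (Module.Dual R M)) (ModuleCat.of R R) i))

/-- `C` is a first cosyzygy `Ω⁻¹M` of `M`: the `R`-dual of a minimal first syzygy of `M*`. -/
def IsCosyzygy (M : Type u) [AddCommGroup M] [Module R M] (C : ModuleCat.{u} R) : Prop :=
  ∃ K : ModuleCat.{u} R, IsSyzygy R (ModuleCat.of R (Module.Dual R M)) K ∧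
    Nonempty (C ≃ₗ[R] Module.Dual R K)

/-- `T` is the Auslander transpose of `M`: the cokernel of the dual of the first map
in a minimal free presentation of `M`. -/
def IsTranspose (M T : ModuleCat.{u} R) : Prop :=
  ∃ (n₀ n₁ : ℕ) (d : (Fin n₁ → R) →ₗ[R] (Fin n₀ → R)) (p : (Fin n₀ → R) →ₗ[R] M),
    Function.Surjective p ∧ LinearMap.ker p = LinearMap.range d ∧
    LinearMap.ker p ≤ ((⊥ : Ideal R).jacobson) • (⊤ : Submodule R (Fin n₀ → R)) ∧
    LinearMap.ker d ≤ ((⊥ : Ideal R).jacobson) • (⊤ : Submodule R (Fin n₁ → R)) ∧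
    Nonempty (T ≃ₗ[R] (Module.Dual R (Fin n₁ → R) ⧸ LinearMap.range d.dualMap))

/-- The `I`-torsion submodule `Γ_I(M)`. -/
def torsSub (I : Ideal R) (M : Type u) [AddCommGroup M] [Module R M] : Submodule R M :=
  ⨆ n : ℕ, Submodule.torsionBySet R M ((I ^ n : Ideal R) : Set R)

/-- A Noetherian local ring is Gorenstein iff it has finite self-injective dimension,
iff `Ext^i(k, R) = 0` for all sufficiently large `i`. -/
def IsGorensteinLocal [IsLocalRing R] : Prop :=
  ∃ n : ℕ, ∀ i : ℕ, n < i →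
    Subsingleton (extM R (ModuleCat.of R (ResidueField R)) (ModuleCat.of R R) i)

/-- A maximal Cohen-Macaulay module: finitely generated with depth equal to `dim R`. -/
def IsMCM [IsLocalRing R] (M : ModuleCat.{u} R) : Prop :=
  Module.Finite R M ∧ ((mdepth R M : ℕ∞) : WithBot ℕ∞) = ringKrullDim R

/-- `X` is a thick subcategory of `G`: closed under direct summands and two-out-of-three
for short exact sequences with all terms in `G`. -/
def IsThickIn (G X : Set (ModuleCat.{u} R)) : Prop :=
  X ⊆ G ∧ (∀ M ∈ X, ∀ N : ModuleCat.{u} R, IsSummand R N M → N ∈ X) ∧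
  (∀ L M N : ModuleCat.{u} R, L ∈ G → M ∈ G → N ∈ G → SES R L M N →
    ((L ∈ X ∧ M ∈ X) → N ∈ X) ∧ ((L ∈ X ∧ N ∈ X) → M ∈ X) ∧ ((M ∈ X ∧ N ∈ X) → L ∈ X))

/-- The resolving closure `res M`: the smallest resolving subcategory containing `M`. -/
def resClosure (M : ModuleCat.{u} R) : Set (ModuleCat.{u} R) :=
  ⋂₀ {X | IsResolving R X ∧ M ∈ X}

/-- The ball `|G|_r` (no syzygies, no free modules added). -/
def pball (G : ModuleCat.{u} R) : ℕ → Set (ModuleCat.{u} R)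
  | 0 => ∅
  | 1 => {M | AddClosure R {G} M}
  | r + 2 => {M | AddClosure R
      (circOp R (pball G (r + 1)) {N | AddClosure R {G} N}) M}

/-- An indecomposable module. -/
def Indecomp (M : ModuleCat.{u} R) : Prop :=
  ¬ Subsingleton M ∧ ∀ A B : Submodule R M, IsCompl A B → A = ⊥ ∨ B = ⊥

/-- `N` is the kernel of some surjection from a finite free module onto `M`
(a not-necessarily-minimal syzygy). -/
def IsGSyzygy (M N : ModuleCat.{u} R) : Prop :=
  ∃ (n : ℕ) (f : (Fin n → R) →ₗ[R] M), Function.Surjective f ∧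
    Nonempty (N ≃ₗ[R] LinearMap.ker f)

/-- `N` is an `n`-fold (not-necessarily-minimal) syzygy of `M`. -/
def IsGNSyzygy : ℕ → ModuleCat.{u} R → ModuleCat.{u} R → Prop
  | 0, M, N => Nonempty (N ≃ₗ[R] M)
  | n + 1, M, N => ∃ K : ModuleCat.{u} R, IsGSyzygy R M K ∧ IsGNSyzygy n K N

/-- Projective dimension at most `n`. -/
def PdLE (n : ℕ) (M : ModuleCat.{u} R) : Prop :=
  ∃ N : ModuleCat.{u} R, IsGNSyzygy R n M N ∧ Module.Projective R N

/-- Projective dimension, as an element of `ℕ∞`. -/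
noncomputable def pdim (M : ModuleCat.{u} R) : ℕ∞ :=
  sInf {n : ℕ∞ | ∃ m : ℕ, (m : ℕ∞) = n ∧ PdLE R m M}

end Prelim2

/-!
By Rees' theorem, `n ≤ depth X` holds exactly when `Ext^i(k, X) = 0` for all `i < n`, where
`k` is the residue field (for `X = 0` both sides hold trivially). Given that `Ext^i(k, N)`
vanishes for `i < n`, the long exact sequence of `Ext(k, -)` for `0 → L → M → N → 0` shows that
`Ext^i(k, L)` vanishes for all `i < n` if and only if `Ext^i(k, M)` does.
-/

open RingTheory.Sequence CategoryTheory.Abelian CategoryTheory.Limits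

namespace CategoryTheory

lemma Abelian.Ext.subsingleton_of_isZero {C : Type*} [Category C] [Abelian C] [HasExt C]
    (X : C) {Y : C} (hY : IsZero Y) (n : ℕ) : Subsingleton (Ext X Y n) :=
  subsingleton_of_forall_eq 0 fun x => by
    rw [← Ext.comp_mk₀_id x, hY.eq_of_src (𝟙 Y) 0, Ext.mk₀_zero, Ext.comp_zero]

namespace ShortComplex.ShortExact

variable {C : Type*} [Category C] [Abelian C] [HasExt C] {S : ShortComplex C}

lemma subsingleton_ext_X₂ (hS : S.ShortExact) (X : C) {n : ℕ}
    (h₁ : Subsingleton (Ext X S.X₁ n)) (h₃ : Subsingleton (Ext X S.X₃ n)) :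
    Subsingleton (Ext X S.X₂ n) :=
  subsingleton_of_forall_eq 0 fun x => by
    obtain ⟨y, rfl⟩ := Ext.covariant_sequence_exact₂ X hS x (Subsingleton.elim _ _)
    rw [Subsingleton.elim y 0, Ext.zero_comp]

lemma subsingleton_ext_X₁_zero (hS : S.ShortExact) (X : C)
    (h₂ : Subsingleton (Ext X S.X₂ 0)) : Subsingleton (Ext X S.X₁ 0) :=
  have := hS.mono_f
  (Ext.postcomp_mk₀_injective_of_mono X S.f).subsingleton

lemma subsingleton_ext_X₁_succ (hS : S.ShortExact) (X : C) {n : ℕ}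
    (h₃ : Subsingleton (Ext X S.X₃ n)) (h₂ : Subsingleton (Ext X S.X₂ (n + 1))) :
    Subsingleton (Ext X S.X₁ (n + 1)) :=
  subsingleton_of_forall_eq 0 fun x => by
    obtain ⟨y, rfl⟩ := Ext.covariant_sequence_exact₁ X hS x (Subsingleton.elim _ _) rfl
    rw [Subsingleton.elim y 0, Ext.zero_comp]

lemma forall_subsingleton_ext_iff (hS : S.ShortExact) (X : C) (n : ℕ) :
    ((∀ i < n, Subsingleton (Ext X S.X₁ i)) ∧ ∀ i < n, Subsingleton (Ext X S.X₃ i)) ↔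
      ((∀ i < n, Subsingleton (Ext X S.X₂ i)) ∧ ∀ i < n, Subsingleton (Ext X S.X₃ i)) := by
  refine and_congr_left fun h₃ => ⟨fun h₁ i hi => ?_, fun h₂ i hi => ?_⟩
  · exact hS.subsingleton_ext_X₂ X (h₁ i hi) (h₃ i hi)
  · cases i with
    | zero => exact hS.subsingleton_ext_X₁_zero X (h₂ 0 hi)
    | succ i => exact hS.subsingleton_ext_X₁_succ X (h₃ i (by omega)) (h₂ (i + 1) hi)

end ShortComplex.ShortExact

end CategoryTheory

lemma RingTheory.Sequence.isWeaklyRegular_of_subsingleton {R : Type*} [CommRing R]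
    (X : Type*) [AddCommGroup X] [Module R X] [Subsingleton X] (rs : List R) :
    IsWeaklyRegular X rs :=
  (isWeaklyRegular_iff X rs).mpr fun i _ =>
    have : Subsingleton (X ⧸ (Ideal.ofList (rs.take i) • ⊤ : Submodule R X)) :=
      (Submodule.mkQ_surjective _).subsingleton
    fun _ _ _ => Subsingleton.elim _ _

section Depth

variable {R : Type u} [CommRing R] [IsLocalRing R] (X : Type u) [AddCommGroup X] [Module R X]

lemma natCast_le_mdepth_iff (n : ℕ) :
    (n : ℕ∞) ≤ mdepth R X ↔ ∃ rs : List R, rs.length = n ∧ (∀ r ∈ rs, r ∈ maximalIdeal R) ∧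
      IsWeaklyRegular X rs := by
  refine ⟨fun h => ?_, fun ⟨rs, hlen, hmem, hreg⟩ => le_sSup ⟨rs, by rw [hlen], hmem, hreg⟩⟩
  cases n with
  | zero => exact ⟨[], rfl, by simp, IsWeaklyRegular.nil R X⟩
  | succ n =>
    obtain ⟨_, ⟨rs, rfl, hmem, hreg⟩, hlt⟩ :=
      lt_sSup_iff.mp ((ENat.natCast_lt_natCast.mpr n.lt_succ_self).trans_le h)
    have hlen : n + 1 ≤ rs.length := by exact_mod_cast Order.add_one_le_of_lt hlt
    rw [← List.take_append_drop (n + 1) rs, isWeaklyRegular_append_iff] at hreg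
    exact ⟨rs.take (n + 1), by simp [hlen], fun r hr => hmem r (List.mem_of_mem_take hr), hreg.1⟩

lemma natCast_le_mdepth_iff_subsingleton_ext [IsNoetherianRing R] [Module.Finite R X] (n : ℕ) :
    (n : ℕ∞) ≤ mdepth R X ↔ ∀ i < n, Subsingleton
      (Ext (ModuleCat.of R (Shrink.{u} (R ⧸ maximalIdeal R))) (ModuleCat.of R X) i) := by
  rcases subsingleton_or_nontrivial X with hX | hX
  · refine iff_of_true ?_ fun i _ => Ext.subsingleton_of_isZero _
      (ModuleCat.isZero_of_subsingleton _) i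
    exact (natCast_le_mdepth_iff X n).mpr ⟨List.replicate n 0, List.length_replicate,
      fun r hr => List.eq_of_mem_replicate hr ▸ zero_mem _, isWeaklyRegular_of_subsingleton X _⟩
  · have hsmul : maximalIdeal R • (⊤ : Submodule R X) < ⊤ :=
      (Submodule.top_ne_ideal_smul_of_le_jacobson_annihilator
        (maximalIdeal_le_jacobson _)).symm.lt_top
    refine (natCast_le_mdepth_iff X n).trans <| Iff.trans ?_
      ((ModuleCat.exists_isRegular_tfae _ n (ModuleCat.of R X) hsmul).out 3 1)
    refine exists_congr fun rs => and_congr_right fun _ => and_congr_right fun hrs => ?_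
    exact (isRegular_iff_isWeaklyRegular_of_subset_maximalIdeal hrs).symm

end Depth

/-- For a short exact sequence `0 → L → M → N → 0` of finitely
generated modules over a Noetherian local ring,
`min (depth L) (depth N) = min (depth M) (depth N)`. -/
theorem depth_min_eq_of_shortExactSeq
    (R : Type u) [CommRing R] [IsNoetherianRing R] [IsLocalRing R]
    (L M N : Type u) [AddCommGroup L] [Module R L] [AddCommGroup M] [Module R M]
    [AddCommGroup N] [Module R N]
    [Module.Finite R L] [Module.Finite R M] [Module.Finite R N]
    (f : L →ₗ[R] M) (g : M →ₗ[R] N)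
    (hf : Function.Injective f) (hg : Function.Surjective g)
    (hfg : LinearMap.ker g = LinearMap.range f) :
    min (mdepth R L) (mdepth R N) = min (mdepth R M) (mdepth R N) := by
  have hexact : Function.Exact f g := LinearMap.exact_iff.mpr hfg
  have hS := ModuleCat.shortComplex_shortExact
    (ModuleCat.shortComplexOfCompEqZero f g hexact.linearMap_comp_eq_zero) hexact hf hg
  refine ENat.eq_of_forall_natCast_le_iff fun n => ?_
  simp only [le_min_iff, natCast_le_mdepth_iff_subsingleton_ext]
  exact hS.forall_subsingleton_ext_iff _ n
end

section
/- Let R be a commutative Noetherian local ring, M a finitely generated R-module, and x ∈ R an R-regular element. Then for every n ≥ 0 there is an isomorphism of R/xR-modules Ω^n_{R/xR}(ΩM/xΩM) ≅ Ω^{n+1}M / x·Ω^{n+1}M, where Ω denotes the syzygy in a minimal free resolution. -/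
open CategoryTheory IsLocalRing

universe u

namespace SyzygyAux

section A
variable {R : Type u} [CommRing R] (I : Ideal R)


theorem quot_compat {A : Type u} [AddCommGroup A] [Module R A] (r : R)
    (a : A ⧸ (I • ⊤ : Submodule R A)) :
    Ideal.Quotient.mk I r • a = r • a := by
  obtain ⟨a, rfl⟩ := Submodule.Quotient.mk_surjective _ a
  rw [Module.Quotient.mk_smul_mk, Submodule.Quotient.mk_smul]

theorem base_compat (r : R) (c : R ⧸ I) : Ideal.Quotient.mk I r • c = r • c := by
  obtain ⟨s, rfl⟩ := Ideal.Quotient.mk_surjective c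
  rfl

theorem pi_compat {m : ℕ} (r : R) (c : Fin m → R ⧸ I) :
    Ideal.Quotient.mk I r • c = r • c := by
  funext i
  simpa using base_compat I r (c i)
end A
section B
variable {R : Type u} [CommRing R] {I : Ideal R}

/-- Upgrade an `R`-linear map between `R⧸I`-modules with compatible actions. -/
def upMap {A B : Type u} [AddCommGroup A] [AddCommGroup B] [Module R A] [Module R B]
    [Module (R ⧸ I) A] [Module (R ⧸ I) B]
    (hA : ∀ (r : R) (a : A), Ideal.Quotient.mk I r • a = r • a)
    (hB : ∀ (r : R) (b : B), Ideal.Quotient.mk I r • b = r • b)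
    (f : A →ₗ[R] B) : A →ₗ[R ⧸ I] B where
  toFun := f
  map_add' := map_add f
  map_smul' c a := by
    obtain ⟨r, rfl⟩ := Ideal.Quotient.mk_surjective c
    simp [hA, hB]

def upEquiv {A B : Type u} [AddCommGroup A] [AddCommGroup B] [Module R A] [Module R B]
    [Module (R ⧸ I) A] [Module (R ⧸ I) B]
    (hA : ∀ (r : R) (a : A), Ideal.Quotient.mk I r • a = r • a)
    (hB : ∀ (r : R) (b : B), Ideal.Quotient.mk I r • b = r • b)
    (e : A ≃ₗ[R] B) : A ≃ₗ[R ⧸ I] B :=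
  { upMap hA hB e.toLinearMap with
    invFun := e.symm
    left_inv := e.left_inv
    right_inv := e.right_inv }

@[simp] theorem upEquiv_apply {A B : Type u} [AddCommGroup A] [AddCommGroup B] [Module R A]
    [Module R B] [Module (R ⧸ I) A] [Module (R ⧸ I) B] (hA : ∀ (r : R) (a : A), Ideal.Quotient.mk I r • a = r • a)
    (hB : ∀ (r : R) (b : B), Ideal.Quotient.mk I r • b = r • b) (e : A ≃ₗ[R] B) (a : A) :
    upEquiv hA hB e a = e a := rfl
end B
section C
variable {R : Type u} [CommRing R] (I : Ideal R)

def piMk (m : ℕ) : (Fin m → R) →ₗ[R] (Fin m → R ⧸ I) :=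
  LinearMap.pi fun i => I.mkQ.comp (LinearMap.proj i)

@[simp] theorem piMk_apply (m : ℕ) (v : Fin m → R) (i : Fin m) :
    piMk I m v i = Ideal.Quotient.mk I (v i) := rfl

theorem piMk_surjective (m : ℕ) : Function.Surjective (piMk I m) := fun c => by
  choose w hw using fun i => Ideal.Quotient.mk_surjective (c i)
  exact ⟨w, funext fun i => hw i⟩

theorem ker_piMk (m : ℕ) :
    LinearMap.ker (piMk I m) = (I • ⊤ : Submodule R (Fin m → R)) := by
  apply le_antisymm
  · intro v hv
    have hvi : ∀ i, v i ∈ I := fun i => by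
      have := congrFun (LinearMap.mem_ker.mp hv) i
      simpa [Ideal.Quotient.eq_zero_iff_mem] using this
    have : v = ∑ i, Pi.single i (v i) := (Finset.univ_sum_single v).symm
    rw [this]
    refine Submodule.sum_mem _ fun i _ => ?_
    have h1 : Pi.single i (v i) = v i • (Pi.single i (1 : R) : Fin m → R) := by
      funext j
      by_cases hj : j = i
      · subst hj; simp
      · simp [Pi.single_eq_of_ne hj]
    rw [h1]
    exact Submodule.smul_mem_smul (hvi i) Submodule.mem_top
  · refine Submodule.smul_le.mpr fun r hr v _ => ?_
    rw [LinearMap.mem_ker]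
    funext i
    show Ideal.Quotient.mk I ((r • v) i) = 0
    rw [Ideal.Quotient.eq_zero_iff_mem]
    exact I.mul_mem_right (v i) hr

noncomputable def piQuotEquiv (m : ℕ) :
    ((Fin m → R) ⧸ (I • ⊤ : Submodule R (Fin m → R))) ≃ₗ[R] (Fin m → R ⧸ I) :=
  (Submodule.quotEquivOfEq _ _ (ker_piMk I m).symm).trans
    ((piMk I m).quotKerEquivOfSurjective (piMk_surjective I m))

@[simp] theorem piQuotEquiv_mk (m : ℕ) (v : Fin m → R) :
    piQuotEquiv I m (Submodule.Quotient.mk v) = piMk I m v := rfl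
end C
section D
variable {R : Type u} [CommRing R] {I : Ideal R}

theorem comap_cond {A B : Type u} [AddCommGroup A] [AddCommGroup B] [Module R A] [Module R B]
    (f : A →ₗ[R] B) :
    (I • ⊤ : Submodule R A) ≤ (I • ⊤ : Submodule R B).comap f := by
  rw [← Submodule.map_le_iff_le_comap, Submodule.map_smul'']
  exact Submodule.smul_mono le_rfl le_top

/-- Reduction of a linear map modulo `I`. -/
def quotMap {A B : Type u} [AddCommGroup A] [AddCommGroup B] [Module R A] [Module R B]
    (f : A →ₗ[R] B) :
    (A ⧸ (I • ⊤ : Submodule R A)) →ₗ[R] (B ⧸ (I • ⊤ : Submodule R B)) :=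
  Submodule.mapQ _ _ f (comap_cond f)

@[simp] theorem quotMap_mk {A B : Type u} [AddCommGroup A] [AddCommGroup B] [Module R A]
    [Module R B] (f : A →ₗ[R] B) (a : A) :
    quotMap (I := I) f (Submodule.Quotient.mk a)
      = (Submodule.Quotient.mk (f a) : B ⧸ (I • ⊤ : Submodule R B)) := rfl

theorem quotMap_surjective {A B : Type u} [AddCommGroup A] [AddCommGroup B] [Module R A]
    [Module R B] (f : A →ₗ[R] B) (hf : Function.Surjective f) :
    Function.Surjective (quotMap (I := I) f) := by
  intro b
  obtain ⟨b, rfl⟩ := Submodule.Quotient.mk_surjective _ b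
  obtain ⟨a, rfl⟩ := hf b
  exact ⟨Submodule.Quotient.mk a, rfl⟩

/-- Reduction of a linear equiv modulo `I`, as `R`-linear equiv. -/
noncomputable def quotEquivOfR {A B : Type u} [AddCommGroup A] [AddCommGroup B] [Module R A]
    [Module R B] (e : A ≃ₗ[R] B) :
    (A ⧸ (I • ⊤ : Submodule R A)) ≃ₗ[R] (B ⧸ (I • ⊤ : Submodule R B)) :=
  Submodule.Quotient.equiv _ _ e
    (by
      show Submodule.map (e : A →ₗ[R] B) (I • ⊤) = I • ⊤
      rw [Submodule.map_smul'', Submodule.map_top, LinearEquiv.range e])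

theorem mem_span_singleton_smul_top {A : Type u} [AddCommGroup A] [Module R A] {x : R} {a : A} :
    a ∈ (Ideal.span {x} • ⊤ : Submodule R A) ↔ ∃ y, a = x • y := by
  rw [Submodule.ideal_span_singleton_smul]
  rw [← SetLike.mem_coe, Submodule.coe_pointwise_smul, Set.mem_smul_set]
  constructor
  · rintro ⟨y, -, rfl⟩
    exact ⟨y, rfl⟩
  · rintro ⟨y, rfl⟩
    exact ⟨y, trivial, rfl⟩

theorem reg_pi {x : R} (hx : IsSMulRegular R x) (m : ℕ) : IsSMulRegular (Fin m → R) x :=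
  fun a b h => funext fun i => hx (congrFun h i)

theorem reg_submodule {A : Type u} [AddCommGroup A] [Module R A] {x : R}
    (hx : IsSMulRegular A x) (p : Submodule R A) : IsSMulRegular p x :=
  fun a b h => Subtype.ext (hx (by simpa using congrArg Subtype.val h))

theorem reg_equiv {A B : Type u} [AddCommGroup A] [AddCommGroup B] [Module R A] [Module R B]
    {x : R} (e : A ≃ₗ[R] B) (hB : IsSMulRegular B x) : IsSMulRegular A x := by
  intro a b h
  have : e (x • a) = e (x • b) := congrArg e h
  rw [map_smul, map_smul] at this
  exact e.injective (hB this)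

theorem jac_map {r : R} (hr : r ∈ (⊥ : Ideal R).jacobson) :
    Ideal.Quotient.mk I r ∈ (⊥ : Ideal (R ⧸ I)).jacobson := by
  rw [Ideal.jacobson, Ideal.mem_sInf] at hr ⊢
  rintro J ⟨-, hJ⟩
  exact hr (I := J.comap (Ideal.Quotient.mk I))
    ⟨bot_le, Ideal.comap_isMaximal_of_surjective _ Ideal.Quotient.mk_surjective⟩
end D
section E
variable {S : Type u} [CommRing S] [IsNoetherianRing S]



/-- An endomorphism of a finite free module agreeing with a minimal cover is surjective. -/
theorem endo_bijective {p : ℕ} {M : Type u} [AddCommGroup M] [Module S M]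
    (f : (Fin p → S) →ₗ[S] M)
    (hker : LinearMap.ker f ≤ ((⊥ : Ideal S).jacobson) • (⊤ : Submodule S (Fin p → S)))
    (u : (Fin p → S) →ₗ[S] (Fin p → S)) (hu : f ∘ₗ u = f) :
    Function.Surjective u := by
  have h1 : (⊤ : Submodule S (Fin p → S)) ≤
      LinearMap.range u ⊔ ((⊥ : Ideal S).jacobson) • (⊤ : Submodule S (Fin p → S)) := by
    intro v _
    have hv : v - u v ∈ LinearMap.ker f := by
      rw [LinearMap.mem_ker, map_sub]
      have : f (u v) = f v := LinearMap.congr_fun hu v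
      rw [this, sub_self]
    have h2 : v = u v + (v - u v) := by abel
    rw [h2]
    exact Submodule.add_mem_sup (LinearMap.mem_range_self u v) (hker hv)
  have h3 := Submodule.le_of_le_smul_of_le_jacobson_bot
    (IsNoetherian.noetherian (⊤ : Submodule S (Fin p → S))) le_rfl h1
  rw [← LinearMap.range_eq_top]
  exact le_antisymm le_top h3

/-- Uniqueness of minimal syzygies. -/
theorem minSyzygy_unique {n n' : ℕ} {M : Type u} [AddCommGroup M] [Module S M]
    (f : (Fin n → S) →ₗ[S] M) (f' : (Fin n' → S) →ₗ[S] M)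
    (hf : Function.Surjective f) (hf' : Function.Surjective f')
    (hker : LinearMap.ker f ≤ ((⊥ : Ideal S).jacobson) • ⊤)
    (hker' : LinearMap.ker f' ≤ ((⊥ : Ideal S).jacobson) • ⊤) :
    Nonempty (LinearMap.ker f ≃ₗ[S] LinearMap.ker f') := by
  obtain ⟨α, hα⟩ := Module.projective_lifting_property f' f hf'
  obtain ⟨β, hβ⟩ := Module.projective_lifting_property f f' hf
  have hφ : f ∘ₗ (β ∘ₗ α) = f := by rw [← LinearMap.comp_assoc, hβ, hα]
  have hψ : f' ∘ₗ (α ∘ₗ β) = f' := by rw [← LinearMap.comp_assoc, hα, hβ]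
  have hφs := endo_bijective f hker _ hφ
  have hψs := endo_bijective f' hker' _ hψ
  have hφi := IsNoetherian.injective_of_surjective_endomorphism _ hφs
  have hψi := IsNoetherian.injective_of_surjective_endomorphism _ hψs
  have hαi : Function.Injective α := by
    have : Function.Injective (⇑β ∘ ⇑α) := by
      simpa [LinearMap.coe_comp] using hφi
    exact Function.Injective.of_comp this
  have hαs : Function.Surjective α := by
    have : Function.Surjective (⇑α ∘ ⇑β) := by
      simpa [LinearMap.coe_comp] using hψs
    exact Function.Surjective.of_comp this
  let e := LinearEquiv.ofBijective α ⟨hαi, hαs⟩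
  have hmap : (LinearMap.ker f).map (e : (Fin n → S) →ₗ[S] (Fin n' → S))
      = LinearMap.ker f' := by
    apply le_antisymm
    · rintro _ ⟨v, hv, rfl⟩
      have h1 : f' (α v) = f v := LinearMap.congr_fun hα v
      have h2 : (e : (Fin n → S) →ₗ[S] (Fin n' → S)) v = α v := rfl
      rw [LinearMap.mem_ker, h2, h1]
      exact hv
    · intro w hw
      obtain ⟨v, rfl⟩ := hαs w
      have hv : v ∈ LinearMap.ker f := by
        rw [LinearMap.mem_ker, ← LinearMap.congr_fun hα v]
        exact hw
      exact ⟨v, hv, rfl⟩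
  exact ⟨(LinearEquiv.submoduleMap e (LinearMap.ker f)).trans
    (LinearEquiv.ofEq _ _ hmap)⟩
end E
section F
variable {S : Type u} [CommRing S]

theorem isSyzygy_congr {M M' K : ModuleCat.{u} S} (u : ↥M ≃ₗ[S] ↥M')
    (h : IsSyzygy S M K) : IsSyzygy S M' K := by
  obtain ⟨n, f, hs, hk, ⟨e⟩⟩ := h
  have hker : LinearMap.ker (u.toLinearMap ∘ₗ f) = LinearMap.ker f := by
    rw [LinearMap.ker_comp, LinearEquiv.ker, Submodule.comap_bot]
  exact ⟨n, u.toLinearMap ∘ₗ f, u.surjective.comp hs, hker.le.trans hk,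
    ⟨e.trans (LinearEquiv.ofEq _ _ hker.symm)⟩⟩

theorem isNSyzygy_congr_left (n : ℕ) {M M' N : ModuleCat.{u} S} (u : ↥M ≃ₗ[S] ↥M')
    (h : IsNSyzygy S n M N) : IsNSyzygy S n M' N := by
  cases n with
  | zero =>
    obtain ⟨e⟩ := (h : Nonempty (↥N ≃ₗ[S] ↥M))
    exact ⟨e.trans u⟩
  | succ n =>
    obtain ⟨K, hK, hn⟩ := (h : ∃ K, IsSyzygy S M K ∧ IsNSyzygy S n K N)
    exact ⟨K, isSyzygy_congr u hK, hn⟩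

theorem isSyzygy_unique [IsNoetherianRing S] {M K K' : ModuleCat.{u} S}
    (h : IsSyzygy S M K) (h' : IsSyzygy S M K') : Nonempty (↥K ≃ₗ[S] ↥K') := by
  obtain ⟨n, f, hs, hk, ⟨e⟩⟩ := h
  obtain ⟨n', f', hs', hk', ⟨e'⟩⟩ := h'
  obtain ⟨w⟩ := minSyzygy_unique f f' hs hs' hk hk'
  exact ⟨e.trans (w.trans e'.symm)⟩

theorem isSyzygy_regular {M K : ModuleCat.{u} S} {x : S} (hx : IsSMulRegular S x)
    (h : IsSyzygy S M K) : IsSMulRegular ↥K x := by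
  obtain ⟨n, f, -, -, ⟨e⟩⟩ := h
  exact reg_equiv e (reg_submodule (reg_pi hx n) _)

end F

section G
variable {R : Type u} [CommRing R]

set_option maxHeartbeats 1600000 in
theorem isSyzygy_quot {x : R} (hx : IsSMulRegular R x) {W K : ModuleCat.{u} R}
    (hxW : IsSMulRegular ↥W x) (h : IsSyzygy R W K) :
    IsSyzygy (R ⧸ Ideal.span {x})
      (ModuleCat.of _ (↥W ⧸ (Ideal.span {x} • ⊤ : Submodule R ↥W)))
      (ModuleCat.of _ (↥K ⧸ (Ideal.span {x} • ⊤ : Submodule R ↥K))) := by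
  set I : Ideal R := Ideal.span {x} with hI
  obtain ⟨m, f, hfs, hker, ⟨eK⟩⟩ := h
  let g : ((Fin m → R) ⧸ (I • ⊤ : Submodule R (Fin m → R))) →ₗ[R ⧸ I]
      (↥W ⧸ (I • ⊤ : Submodule R ↥W)) :=
    upMap (quot_compat I) (quot_compat I) (quotMap f)
  let ε : ((Fin m → R) ⧸ (I • ⊤ : Submodule R (Fin m → R))) ≃ₗ[R ⧸ I] (Fin m → R ⧸ I) :=
    upEquiv (quot_compat I) (pi_compat I) (piQuotEquiv I m)
  let fbar : (Fin m → R ⧸ I) →ₗ[R ⧸ I] (↥W ⧸ (I • ⊤ : Submodule R ↥W)) :=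
    g ∘ₗ (ε.symm : (Fin m → R ⧸ I) →ₗ[R ⧸ I] _)
  have hfbar : ∀ c, fbar c = g (ε.symm c) := fun c => rfl
  have hg : ∀ a, g a = quotMap (I := I) f a := fun a => rfl
  have hx_mem : x ∈ I := Ideal.mem_span_singleton_self x
  -- a lemma sending jacobson smul top to jacobson smul top
  have key : ∀ u : Fin m → R, u ∈ ((⊥ : Ideal R).jacobson • ⊤ : Submodule R (Fin m → R)) →
      ε (Submodule.Quotient.mk u) ∈
        ((⊥ : Ideal (R ⧸ I)).jacobson • ⊤ : Submodule (R ⧸ I) (Fin m → R ⧸ I)) := by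
    intro u hu
    refine Submodule.smul_induction_on hu (fun r hr v _ => ?_) (fun a b ha hb => ?_)
    · have h1 : (Submodule.Quotient.mk (r • v) :
          (Fin m → R) ⧸ (I • ⊤ : Submodule R (Fin m → R))) =
          Ideal.Quotient.mk I r • Submodule.Quotient.mk v := by
        rw [Submodule.Quotient.mk_smul, ← quot_compat I]
      rw [h1, map_smul]
      exact Submodule.smul_mem_smul (jac_map hr) Submodule.mem_top
    · have h1 : (Submodule.Quotient.mk (a + b) :
          (Fin m → R) ⧸ (I • ⊤ : Submodule R (Fin m → R))) =
          Submodule.Quotient.mk a + Submodule.Quotient.mk b := rfl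
      rw [h1, map_add]
      exact Submodule.add_mem _ ha hb
  -- analysis of elements of the kernel of fbar
  have kerstep : ∀ c : Fin m → R ⧸ I, fbar c = 0 → ∀ v : Fin m → R,
      (Submodule.Quotient.mk v :
        (Fin m → R) ⧸ (I • ⊤ : Submodule R (Fin m → R))) = ε.symm c →
      ∃ k ∈ LinearMap.ker f, (Submodule.Quotient.mk k :
        (Fin m → R) ⧸ (I • ⊤ : Submodule R (Fin m → R))) = ε.symm c := by
    intro c hc v hv
    have h1 : quotMap (I := I) f (Submodule.Quotient.mk v) = 0 := by
      rw [← hg, hv]; rw [hfbar] at hc; exact hc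
    rw [quotMap_mk, Submodule.Quotient.mk_eq_zero] at h1
    obtain ⟨w, hw⟩ := mem_span_singleton_smul_top.mp h1
    obtain ⟨z, hz⟩ := hfs w
    refine ⟨v - x • z, ?_, ?_⟩
    · rw [LinearMap.mem_ker, map_sub, map_smul, hz, ← hw, sub_self]
    · rw [← hv, Submodule.Quotient.eq]
      have : v - x • z - v = -(x • z) := by abel
      rw [this]
      exact Submodule.neg_mem _ (Submodule.smul_mem_smul hx_mem Submodule.mem_top)
  refine ⟨m, fbar, ?_, ?_, ?_⟩
  · show Function.Surjective ⇑fbar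
    intro b
    obtain ⟨a, ha⟩ := quotMap_surjective (I := I) f hfs b
    exact ⟨ε a, by rw [hfbar, LinearEquiv.symm_apply_apply, hg, ha]⟩
  · show LinearMap.ker fbar ≤ _
    intro c hc
    rw [LinearMap.mem_ker] at hc
    obtain ⟨v, hv⟩ := Submodule.Quotient.mk_surjective _ (ε.symm c)
    obtain ⟨k, hk, hk2⟩ := kerstep c hc v hv
    have : c = ε (Submodule.Quotient.mk k) := by
      rw [hk2, LinearEquiv.apply_symm_apply]
    rw [this]
    exact key k (hker hk)
  · show Nonempty ((↥K ⧸ (I • ⊤ : Submodule R ↥K)) ≃ₗ[R ⧸ I] ↥(LinearMap.ker fbar))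
    have eKbar : (↥K ⧸ (I • ⊤ : Submodule R ↥K)) ≃ₗ[R ⧸ I]
        (↥(LinearMap.ker f) ⧸ (I • ⊤ : Submodule R ↥(LinearMap.ker f))) :=
      upEquiv (quot_compat I) (quot_compat I) (quotEquivOfR eK)
    let ψ : ↥(LinearMap.ker f) →ₗ[R] ((Fin m → R) ⧸ (I • ⊤ : Submodule R (Fin m → R))) :=
      (Submodule.mkQ _) ∘ₗ (LinearMap.ker f).subtype
    have cond : (I • ⊤ : Submodule R ↥(LinearMap.ker f)) ≤ LinearMap.ker ψ := by
      refine Submodule.smul_le.mpr fun r hr k _ => ?_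
      rw [LinearMap.mem_ker]
      show Submodule.Quotient.mk ((r • k : ↥(LinearMap.ker f)) : Fin m → R) = 0
      rw [Submodule.Quotient.mk_eq_zero]
      exact Submodule.smul_mem_smul hr Submodule.mem_top
    let ψq := Submodule.liftQ _ ψ cond
    let χ : (↥(LinearMap.ker f) ⧸ (I • ⊤ : Submodule R ↥(LinearMap.ker f)))
        →ₗ[R ⧸ I] (Fin m → R ⧸ I) :=
      (ε : _ →ₗ[R ⧸ I] _) ∘ₗ upMap (quot_compat I) (quot_compat I) ψq
    have hχ : ∀ k : ↥(LinearMap.ker f), χ (Submodule.Quotient.mk k) =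
        ε (Submodule.Quotient.mk (k : Fin m → R)) := fun k => rfl
    have hmem : ∀ c, χ c ∈ LinearMap.ker fbar := by
      intro c
      obtain ⟨k, rfl⟩ := Submodule.Quotient.mk_surjective _ c
      rw [LinearMap.mem_ker, hχ, hfbar, LinearEquiv.symm_apply_apply, hg, quotMap_mk]
      have : f (k : Fin m → R) = 0 := k.2
      rw [this, Submodule.Quotient.mk_zero]
    let χ' := χ.codRestrict (LinearMap.ker fbar) hmem
    have hinj0 : ∀ c, χ c = 0 → c = 0 := by
      intro c hc
      obtain ⟨k, rfl⟩ := Submodule.Quotient.mk_surjective _ c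
      have hc' : ε (Submodule.Quotient.mk (k : Fin m → R)) = 0 := by rw [← hχ]; exact hc
      have h0 : (Submodule.Quotient.mk (k : Fin m → R) :
          (Fin m → R) ⧸ (I • ⊤ : Submodule R (Fin m → R))) = 0 := by
        apply ε.injective
        rw [hc', map_zero]
      rw [Submodule.Quotient.mk_eq_zero] at h0
      obtain ⟨w, hw⟩ := mem_span_singleton_smul_top.mp h0
      clear hc hc'
      have hfw : f w = 0 := by
        apply hxW
        have h2 : x • f w = f (x • w) := (map_smul f x w).symm
        show x • f w = x • 0
        rw [smul_zero, h2, ← hw]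
        exact k.2
      have hkk : k = x • (⟨w, hfw⟩ : ↥(LinearMap.ker f)) := Subtype.ext hw
      rw [Submodule.Quotient.mk_eq_zero]
      exact mem_span_singleton_smul_top.mpr ⟨_, hkk⟩
    have hinj : Function.Injective χ' := by
      intro a b hab
      have h1' := Subtype.ext_iff.mp hab
      have h1 : χ a = χ b := h1'
      have h2 : χ (a - b) = 0 := by rw [map_sub, h1, sub_self]
      exact sub_eq_zero.mp (hinj0 _ h2)
    have hsurj : Function.Surjective χ' := by
      rintro ⟨c, hc⟩
      rw [LinearMap.mem_ker] at hc
      obtain ⟨v, hv⟩ := Submodule.Quotient.mk_surjective _ (ε.symm c)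
      obtain ⟨k, hk, hk2⟩ := kerstep c hc v hv
      refine ⟨Submodule.Quotient.mk (⟨k, hk⟩ : ↥(LinearMap.ker f)), ?_⟩
      apply Subtype.ext
      show χ (Submodule.Quotient.mk (⟨k, hk⟩ : ↥(LinearMap.ker f))) = c
      rw [hχ]
      show ε (Submodule.Quotient.mk k) = c
      rw [hk2, LinearEquiv.apply_symm_apply]
    exact ⟨eKbar.trans (LinearEquiv.ofBijective χ' ⟨hinj, hsurj⟩)⟩

end G
section H
variable {R : Type u} [CommRing R]

theorem claim_aux [IsNoetherianRing R] {x : R} (hx : IsSMulRegular R x) (n : ℕ) :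
    ∀ (W : ModuleCat.{u} R), IsSMulRegular ↥W x →
      ∀ (L : ModuleCat.{u} R), IsNSyzygy R n W L →
      ∀ (P : ModuleCat.{u} (R ⧸ Ideal.span {x})),
        IsNSyzygy (R ⧸ Ideal.span {x}) n
          (ModuleCat.of (R ⧸ Ideal.span {x})
            (↥W ⧸ (Ideal.span {x} • (⊤ : Submodule R ↥W)))) P →
        Nonempty (↥P ≃ₗ[R ⧸ Ideal.span {x}]
          (↥L ⧸ (Ideal.span {x} • (⊤ : Submodule R ↥L)))) := by
  induction n with
  | zero =>
    intro W _ L hL P hP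
    obtain ⟨eL⟩ := (hL : Nonempty (↥L ≃ₗ[R] ↥W))
    obtain ⟨eP⟩ := (hP : Nonempty (↥P ≃ₗ[R ⧸ Ideal.span {x}]
      (↥W ⧸ (Ideal.span {x} • (⊤ : Submodule R ↥W)))))
    exact ⟨eP.trans (upEquiv (quot_compat _) (quot_compat _) (quotEquivOfR eL)).symm⟩
  | succ n ih =>
    intro W hW L hL P hP
    obtain ⟨K, hK, hKL⟩ := (hL : ∃ K, IsSyzygy R W K ∧ IsNSyzygy R n K L)
    obtain ⟨Q, hQ, hQP⟩ := (hP : ∃ Q, IsSyzygy _ _ Q ∧ IsNSyzygy _ n Q P)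
    have hxK : IsSMulRegular ↥K x := isSyzygy_regular hx hK
    have hKsyz := isSyzygy_quot hx hW hK
    obtain ⟨eQK⟩ := isSyzygy_unique hQ hKsyz
    have hP' := isNSyzygy_congr_left n
      (M' := ModuleCat.of (R ⧸ Ideal.span {x})
        (↥K ⧸ (Ideal.span {x} • (⊤ : Submodule R ↥K)))) eQK hQP
    exact ih K hxK L hKL P hP'

end H


end SyzygyAux

/-- Over a Noetherian local ring `R` with `x ∈ R` a regular element,
`Ω^n_{R/xR}(ΩM/xΩM) ≅ Ω^{n+1}M / x·Ω^{n+1}M` for every `n ≥ 0`. -/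
theorem syzygy_quotient_regular_element
    (R : Type u) [CommRing R] [IsNoetherianRing R] [IsLocalRing R]
    (M : ModuleCat.{u} R) [Module.Finite R M]
    (x : R) (hx : IsSMulRegular R x)
    (n : ℕ) (K L : ModuleCat.{u} R)
    (hK : IsSyzygy R M K) (hL : IsNSyzygy R (n + 1) M L)
    (P : ModuleCat.{u} (R ⧸ Ideal.span {x}))
    (hP : IsNSyzygy (R ⧸ Ideal.span {x}) n
      (ModuleCat.of (R ⧸ Ideal.span {x})
        (↥K ⧸ (Ideal.span {x} • (⊤ : Submodule R ↥K)))) P) :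
    Nonempty (↥P ≃ₗ[R ⧸ Ideal.span {x}]
      (↥L ⧸ (Ideal.span {x} • (⊤ : Submodule R ↥L)))) := by
  obtain ⟨K', hK', hK'L⟩ := (hL : ∃ K', IsSyzygy R M K' ∧ IsNSyzygy R n K' L)
  obtain ⟨eKK'⟩ := SyzygyAux.isSyzygy_unique hK hK'
  have hxK' : IsSMulRegular ↥K' x := SyzygyAux.isSyzygy_regular hx hK'
  have e2 : (↥K ⧸ (Ideal.span {x} • (⊤ : Submodule R ↥K))) ≃ₗ[R ⧸ Ideal.span {x}]
      (↥K' ⧸ (Ideal.span {x} • (⊤ : Submodule R ↥K'))) :=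
    SyzygyAux.upEquiv (SyzygyAux.quot_compat _) (SyzygyAux.quot_compat _) (SyzygyAux.quotEquivOfR eKK')
  have hP' := SyzygyAux.isNSyzygy_congr_left n
    (M := ModuleCat.of (R ⧸ Ideal.span {x})
      (↥K ⧸ (Ideal.span {x} • (⊤ : Submodule R ↥K))))
    (M' := ModuleCat.of (R ⧸ Ideal.span {x})
      (↥K' ⧸ (Ideal.span {x} • (⊤ : Submodule R ↥K')))) e2 hP
  exact SyzygyAux.claim_aux hx n K' hxK' L hK'L P hP'
end

section
/- Let R be a commutative ring, I an ideal of R, and M a finitely generated R/I-module. Then there exists an exact sequence of R-modules 0 → I^{⊕n} → Ω_R M → Ω_{R/I} M → 0 for some n ≥ 0, where Ω_R M and Ω_{R/I} M are syzygies of M over R and over R/I respectively. -/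
open CategoryTheory IsLocalRing

universe u

/-- For an ideal `I` of a commutative ring `R` and a finitely
generated `R/I`-module `M`, there is an exact sequence of `R`-modules
`0 → I^{⊕c} → Ω_R M → Ω_{R/I} M → 0` for suitable (not necessarily minimal)
syzygies of `M` over `R` and over `R/I`. -/
theorem exists_syzygy_exact_sequence_of_quotient
    (R : Type u) [CommRing R] (I : Ideal R)
    (M : Type u) [AddCommGroup M] [Module R M] [Module (R ⧸ I) M]
    [IsScalarTower R (R ⧸ I) M] [Module.Finite (R ⧸ I) M] :
    ∃ (c n m : ℕ) (p : (Fin n → R) →ₗ[R] M)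
      (q : (Fin m → (R ⧸ I)) →ₗ[R ⧸ I] M),
      Function.Surjective p ∧ Function.Surjective q ∧
      ∃ (f : (Fin c → ↥I) →ₗ[R] ↥(LinearMap.ker p))
        (g : ↥(LinearMap.ker p) →ₗ[R] ↥(Submodule.restrictScalars R (LinearMap.ker q))),
        Function.Injective f ∧ Function.Surjective g ∧
        LinearMap.ker g = LinearMap.range f := by
  obtain ⟨n, q, hq⟩ := Module.Finite.exists_fin' (R ⧸ I) M
  -- coordinatewise quotient map
  let π : (Fin n → R) →ₗ[R] (Fin n → R ⧸ I) :=
    LinearMap.pi fun i => (Algebra.linearMap R (R ⧸ I)).comp (LinearMap.proj i)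
  have hπ : Function.Surjective π := by
    intro y
    choose x hx using fun i => Ideal.Quotient.mk_surjective (y i)
    exact ⟨x, funext fun i => hx i⟩
  let p : (Fin n → R) →ₗ[R] M := (q.restrictScalars R).comp π
  have hp : Function.Surjective p := hq.comp hπ
  refine ⟨n, n, n, p, q, hp, hq, ?_⟩
  -- f : I^n → ker p
  have hmemf : ∀ x : Fin n → ↥I,
      (LinearMap.pi fun i => I.subtype.comp (LinearMap.proj i)) x ∈ LinearMap.ker p := by
    intro x
    have : π (fun i => (x i : R)) = 0 := by
      funext i
      simpa [π] using (Ideal.Quotient.eq_zero_iff_mem).2 (x i).2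
    simp only [LinearMap.mem_ker, p, LinearMap.comp_apply]
    rw [show (LinearMap.pi fun i => I.subtype.comp (LinearMap.proj i)) x
        = fun i => (x i : R) from rfl, this]
    simp
  let f : (Fin n → ↥I) →ₗ[R] ↥(LinearMap.ker p) :=
    LinearMap.codRestrict _ (LinearMap.pi fun i => I.subtype.comp (LinearMap.proj i)) hmemf
  -- g : ker p → ker q (restricted scalars)
  have hmemg : ∀ x : ↥(LinearMap.ker p),
      π x.1 ∈ Submodule.restrictScalars R (LinearMap.ker q) := by
    intro x
    exact x.2
  let g : ↥(LinearMap.ker p) →ₗ[R] ↥(Submodule.restrictScalars R (LinearMap.ker q)) :=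
    LinearMap.codRestrict _ (π.comp (LinearMap.ker p).subtype) hmemg
  refine ⟨f, g, ?_, ?_, ?_⟩
  · intro a b hab
    have := congrArg Subtype.val hab
    funext i
    exact Subtype.ext (congrFun this i)
  · rintro ⟨y, hy⟩
    obtain ⟨x, hx⟩ := hπ y
    have hxp : x ∈ LinearMap.ker p := by
      simp only [LinearMap.mem_ker, p, LinearMap.comp_apply, hx]
      exact hy
    exact ⟨⟨x, hxp⟩, Subtype.ext hx⟩
  · ext ⟨x, hx⟩
    simp only [LinearMap.mem_ker, LinearMap.mem_range]
    constructor
    · intro h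
      have h' : π x = 0 := congrArg Subtype.val h
      have hxi : ∀ i, x i ∈ I := fun i =>
        (Ideal.Quotient.eq_zero_iff_mem).1 (congrFun h' i)
      refine ⟨fun i => ⟨x i, hxi i⟩, ?_⟩
      exact Subtype.ext rfl
    · rintro ⟨a, ha⟩
      have ha' : (fun i => (a i : R)) = x := congrArg Subtype.val ha
      apply Subtype.ext
      show π x = 0
      rw [← ha']
      funext i
      simpa [π] using (Ideal.Quotient.eq_zero_iff_mem).2 (a i).2
end

section
/- Let R be a commutative Noetherian local ring, I an ideal, C and M finitely generated R-modules with M ∈ [C]_n (the ball of radius n centered at C) for some n ≥ 1. Then Ann_R Γ_I(M) ⊇ (Ann_R Γ_I(R) · Ann_R Γ_I(C))^n, where Γ_I denotes the I-torsion submodule functor. -/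
open CategoryTheory IsLocalRing

universe u

/-!
Multiplying by `a ∈ Ann Γ_I(Z)` pushes `Γ_I(Y)` into the image of `Γ_I(X)` along any exact
`0 → X → Y → Z`, where `b ∈ Ann Γ_I(X)` kills it; hence `Ann Γ_I(X) · Ann Γ_I(Z) ⊆ Ann Γ_I(Y)`.
`Ann Γ_I(-)` only grows under passing to submodules, so it contains `Ann Γ_I(R)` on every syzygy,
and it is compatible with finite sums and summands. Induction on the radius of the ball then
gives one factor `Ann Γ_I(R) · Ann Γ_I(C)` per extension.
-/

section AnnihilatorTorsion

variable {R : Type u} [CommRing R] (I : Ideal R)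

abbrev annTorsion (M : Type u) [AddCommGroup M] [Module R M] : Ideal R :=
  (torsSub R I M).annihilator

variable {I} {M N : Type u} [AddCommGroup M] [Module R M] [AddCommGroup N] [Module R N]

theorem mem_torsSub_iff {x : M} : x ∈ torsSub R I M ↔ ∃ n : ℕ, ∀ r ∈ I ^ n, r • x = 0 := by
  rw [torsSub, Submodule.mem_iSup_of_directed _
    (Monotone.directed_le fun i j hij => Submodule.torsionBySet_le_torsionBySet_pow i j hij I)]
  simp only [Submodule.mem_torsionBySet_iff, Subtype.forall, SetLike.mem_coe]

theorem map_mem_torsSub (f : M →ₗ[R] N) {x : M} (hx : x ∈ torsSub R I M) :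
    f x ∈ torsSub R I N := by
  obtain ⟨n, hn⟩ := mem_torsSub_iff.1 hx
  exact mem_torsSub_iff.2 ⟨n, fun r hr => by rw [← map_smul, hn r hr, map_zero]⟩

theorem mem_torsSub_of_injective {f : M →ₗ[R] N} (hf : Function.Injective f) {x : M}
    (hx : f x ∈ torsSub R I N) : x ∈ torsSub R I M := by
  obtain ⟨n, hn⟩ := mem_torsSub_iff.1 hx
  exact mem_torsSub_iff.2 ⟨n, fun r hr => hf (by rw [map_smul, hn r hr, map_zero])⟩

theorem annTorsion_le_of_injective {f : N →ₗ[R] M} (hf : Function.Injective f) :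
    annTorsion I M ≤ annTorsion I N := fun a ha =>
  Submodule.mem_annihilator.2 fun x hx => hf <| by
    rw [map_smul, Submodule.mem_annihilator.1 ha _ (map_mem_torsSub f hx), map_zero]

theorem annTorsion_le_of_linearEquiv (e : N ≃ₗ[R] M) : annTorsion I M ≤ annTorsion I N :=
  annTorsion_le_of_injective e.injective

theorem annTorsion_mul_le_of_exact {X Y Z : Type u} [AddCommGroup X] [Module R X]
    [AddCommGroup Y] [Module R Y] [AddCommGroup Z] [Module R Z] {f : X →ₗ[R] Y} {g : Y →ₗ[R] Z}
    (hf : Function.Injective f) (hfg : Function.Exact f g) :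
    annTorsion I X * annTorsion I Z ≤ annTorsion I Y := by
  refine Ideal.mul_le.2 fun b hb a ha => Submodule.mem_annihilator.2 fun y hy => ?_
  obtain ⟨x, hx⟩ : a • y ∈ LinearMap.range f := by
    rw [← LinearMap.exact_iff.1 hfg, LinearMap.mem_ker, map_smul,
      Submodule.mem_annihilator.1 ha _ (map_mem_torsSub g hy)]
  have hx_tors : x ∈ torsSub R I X :=
    mem_torsSub_of_injective hf (hx ▸ Submodule.smul_mem _ a hy)
  rw [mul_smul, ← hx, ← map_smul, Submodule.mem_annihilator.1 hb x hx_tors, map_zero]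

theorem annTorsion_inf_le_prod : annTorsion I M ⊓ annTorsion I N ≤ annTorsion I (M × N) :=
  fun _ ⟨hM, hN⟩ => Submodule.mem_annihilator.2 fun _ hx =>
    Prod.ext (Submodule.mem_annihilator.1 hM _ (map_mem_torsSub (LinearMap.fst R M N) hx))
      (Submodule.mem_annihilator.1 hN _ (map_mem_torsSub (LinearMap.snd R M N) hx))

theorem annTorsion_self_le_pi (m : ℕ) : annTorsion I R ≤ annTorsion I (Fin m → R) :=
  fun _ ha => Submodule.mem_annihilator.2 fun _ hx => funext fun i =>
    Submodule.mem_annihilator.1 ha _ (map_mem_torsSub (LinearMap.proj i) hx)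

theorem annTorsion_self_le_of_isSyzygy {M K : ModuleCat.{u} R} (h : IsSyzygy R M K) :
    annTorsion I R ≤ annTorsion I K := by
  obtain ⟨m, f, -, -, ⟨e⟩⟩ := h
  calc annTorsion I R ≤ annTorsion I (Fin m → R) := annTorsion_self_le_pi _
    _ ≤ annTorsion I (LinearMap.ker f) := annTorsion_le_of_injective (LinearMap.ker f).injective_subtype
    _ ≤ annTorsion I K := annTorsion_le_of_linearEquiv e

theorem annTorsion_inf_le_of_isNSyzygy : ∀ {i : ℕ} {M N : ModuleCat.{u} R},
    IsNSyzygy R i M N → annTorsion I R ⊓ annTorsion I M ≤ annTorsion I N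
  | 0, _, _, ⟨e⟩ => inf_le_right.trans (annTorsion_le_of_linearEquiv e)
  | _ + 1, _, _, ⟨_, hK, hN⟩ =>
    (le_inf inf_le_left (inf_le_left.trans (annTorsion_self_le_of_isSyzygy hK))).trans
      (annTorsion_inf_le_of_isNSyzygy hN)

theorem le_annTorsion_of_addClosure {J : Ideal R} {T : Set (ModuleCat.{u} R)}
    (hT : ∀ M ∈ T, J ≤ annTorsion I M) {M : ModuleCat.{u} R} (h : AddClosure R T M) :
    J ≤ annTorsion I M := by
  induction h with
  | of hM => exact hT _ hM
  | prod _ _ ihM ihN => exact (le_inf ihM ihN).trans annTorsion_inf_le_prod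
  | summand _ hs ih =>
    obtain ⟨i, p, hpi⟩ := hs
    exact ih.trans (annTorsion_le_of_injective
      (Function.LeftInverse.injective (g := p) (LinearMap.congr_fun hpi)))

theorem le_annTorsion_of_mem_bracket {J : Ideal R} {X : Set (ModuleCat.{u} R)}
    (hR : J ≤ annTorsion I R) (hX : ∀ M ∈ X, J ≤ annTorsion I M) {M : ModuleCat.{u} R}
    (h : M ∈ bracket R X) : J ≤ annTorsion I M := by
  refine le_annTorsion_of_addClosure ?_ h
  rintro _ (rfl | ⟨M₀, hM₀, i, hi⟩)
  · exact hR
  · exact (le_inf hR (hX M₀ hM₀)).trans (annTorsion_inf_le_of_isNSyzygy hi)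

theorem le_annTorsion_of_mem_bracket_singleton {C M : ModuleCat.{u} R}
    (h : M ∈ bracket R {C}) : annTorsion I R * annTorsion I C ≤ annTorsion I M :=
  le_annTorsion_of_mem_bracket Ideal.mul_le_left (by rintro _ rfl; exact Ideal.mul_le_right) h

theorem pow_le_annTorsion_of_mem_ball {C : ModuleCat.{u} R} : ∀ {n : ℕ} {M : ModuleCat.{u} R},
    M ∈ ball R C n → (annTorsion I R * annTorsion I C) ^ n ≤ annTorsion I M
  | 0, _, h => h.elim
  | 1, _, h => (pow_one _).trans_le (le_annTorsion_of_mem_bracket_singleton h)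
  | n + 2, _, h => by
    refine le_annTorsion_of_mem_bracket
      ((Ideal.pow_le_self (by omega)).trans Ideal.mul_le_left) ?_ h
    rintro _ ⟨X, hX, Y, hY, f, g, hf, -, hfg⟩
    calc (annTorsion I R * annTorsion I C) ^ (n + 2)
        = (annTorsion I R * annTorsion I C) ^ (n + 1) * (annTorsion I R * annTorsion I C) :=
          pow_succ _ _
      _ ≤ annTorsion I X * annTorsion I Y :=
          Ideal.mul_mono (pow_le_annTorsion_of_mem_ball hX)
            (le_annTorsion_of_mem_bracket_singleton hY)
      _ ≤ _ := annTorsion_mul_le_of_exact hf (LinearMap.exact_iff.2 hfg)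

end AnnihilatorTorsion

theorem annihilator_torsion_of_mem_ball_general
    (R : Type u) [CommRing R]
    (I : Ideal R) (C M : ModuleCat.{u} R) (n : ℕ)
    (h : M ∈ ball R C n) :
    (Module.annihilator R ↥(torsSub R I R) * Module.annihilator R ↥(torsSub R I ↥C)) ^ n ≤
      Module.annihilator R ↥(torsSub R I ↥M) :=
  pow_le_annTorsion_of_mem_ball h

/-- If `M ∈ [C]_n` (`n ≥ 1`), then
`Ann_R Γ_I(M) ⊇ (Ann_R Γ_I(R) · Ann_R Γ_I(C))^n`. -/
theorem annihilator_torsion_of_mem_ball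
    (R : Type u) [CommRing R] [IsNoetherianRing R] [IsLocalRing R]
    (I : Ideal R) (C M : ModuleCat.{u} R) (n : ℕ) (hn : 1 ≤ n)
    (h : M ∈ ball R C n) :
    (Module.annihilator R ↥(torsSub R I R) * Module.annihilator R ↥(torsSub R I ↥C)) ^ n ≤
      Module.annihilator R ↥(torsSub R I ↥M) :=
  annihilator_torsion_of_mem_ball_general R I C M n h
end

section
/- Let (R,m,k) be a commutative Noetherian local ring of positive dimension and X a resolving subcategory of mod R containing k. Then X has infinite radius; that is, for every finitely generated R-module C and every n ≥ 0, X is not contained in the ball [C]_{n+1}. -/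
open CategoryTheory IsLocalRing

universe u

set_option linter.unusedSectionVars false


variable (R : Type u) [CommRing R] [IsLocalRing R]

def Qbd (t : ℕ) (M : Type u) [AddCommGroup M] [Module R M] : Prop :=
  ∀ x : M, (∃ k : ℕ, ∀ c ∈ (maximalIdeal R ^ k : Ideal R), c • x = (0 : M)) →
    ∀ c ∈ (maximalIdeal R ^ t : Ideal R), c • x = 0

variable {R}
variable {M N : Type u} [AddCommGroup M] [Module R M] [AddCommGroup N] [Module R N]

theorem Qbd.mono {t t' : ℕ} (h : t ≤ t') (hq : Qbd R t M) : Qbd R t' M := by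
  intro x hx c hc
  exact hq x hx c (Ideal.pow_le_pow_right h hc)

theorem Qbd.of_inj (f : M →ₗ[R] N) (hf : Function.Injective f) {t : ℕ}
    (hq : Qbd R t N) : Qbd R t M := by
  intro x hx c hc
  apply hf
  rw [map_smul, map_zero]
  refine hq (f x) ?_ c hc
  obtain ⟨k, hk⟩ := hx
  exact ⟨k, fun c hc => by rw [← map_smul, hk c hc, map_zero]⟩

theorem Qbd.pi {t : ℕ} (hq : Qbd R t M) (ι : Type) : Qbd R t (ι → M) := by
  intro x hx c hc
  funext i
  obtain ⟨k, hk⟩ := hx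
  refine hq (x i) ⟨k, fun c hc => ?_⟩ c hc
  have := congrFun (hk c hc) i
  simpa using this

theorem Qbd.prod {t : ℕ} (hqM : Qbd R t M) (hqN : Qbd R t N) : Qbd R t (M × N) := by
  intro x hx c hc
  obtain ⟨k, hk⟩ := hx
  have h1 : c • x.1 = 0 := hqM x.1 ⟨k, fun c hc => congrArg Prod.fst (hk c hc)⟩ c hc
  have h2 : c • x.2 = 0 := hqN x.2 ⟨k, fun c hc => congrArg Prod.snd (hk c hc)⟩ c hc
  exact Prod.ext h1 h2

theorem Qbd.exists [IsNoetherianRing R] [Module.Finite R M] : ∃ t : ℕ, Qbd R t M := by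
  classical
  let T : ℕ →o Submodule R M :=
    ⟨fun k => { carrier := {x | ∀ c ∈ (maximalIdeal R ^ k : Ideal R), c • x = 0}
                zero_mem' := by simp
                add_mem' := by intro a b ha hb c hc; rw [smul_add, ha c hc, hb c hc, add_zero]
                smul_mem' := by
                  intro r x hx c hc
                  rw [smul_comm, hx c hc, smul_zero] },
     by
      intro a b hab x hx c hc
      exact hx c (Ideal.pow_le_pow_right hab hc)⟩
  have : IsNoetherian R M := inferInstance
  obtain ⟨t, ht⟩ := monotone_stabilizes_iff_noetherian.mpr this T
  refine ⟨t, fun x hx c hc => ?_⟩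
  obtain ⟨k, hk⟩ := hx
  have hxk : x ∈ T k := hk
  have hxkt : x ∈ T (max k t) := T.monotone (le_max_left _ _) hxk
  rw [← ht (max k t) (le_max_right _ _)] at hxkt
  exact hxkt c hc

section SESQbd
variable {R : Type u} [CommRing R] [IsLocalRing R]

theorem Qbd.ses {L M N : ModuleCat.{u} R} (h : SES R L M N) {u v : ℕ}
    (hL : Qbd R u L) (hN : Qbd R v N) : Qbd R (u + v) M := by
  obtain ⟨f, g, hf, hg, hker⟩ := h
  intro x hx c hc
  rw [pow_add] at hc
  refine Submodule.mul_induction_on hc (fun a ha b hb => ?_) (fun c₁ c₂ h1 h2 => ?_)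
  · 
    show (a*b) • x = 0
    -- b • x ∈ range f
    have hgbx : g (b • x) = 0 := by
      rw [map_smul]
      refine hN (g x) ?_ b hb
      obtain ⟨k, hk⟩ := hx
      exact ⟨k, fun c hc => by rw [← map_smul, hk c hc, map_zero]⟩
    have : b • x ∈ LinearMap.range f := by rw [← hker]; exact hgbx
    obtain ⟨y, hy⟩ := this
    have hytor : ∃ k : ℕ, ∀ c ∈ (IsLocalRing.maximalIdeal R ^ k : Ideal R), c • y = (0 : L) := by
      obtain ⟨k, hk⟩ := hx
      refine ⟨k, fun c hc => hf ?_⟩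
      rw [map_smul, hy, map_zero, smul_comm, hk c hc, smul_zero]
    have hay : a • y = 0 := hL y hytor a ha
    calc (a * b) • x = a • (b • x) := mul_smul a b x
    _ = a • f y := by rw [hy]
    _ = f (a • y) := (map_smul f a y).symm
    _ = 0 := by rw [hay, map_zero]
  · show (c₁ + c₂) • x = 0
    rw [add_smul, h1, h2, add_zero]

end SESQbd

section BallQbd
variable {R : Type u} [CommRing R] [IsLocalRing R]

theorem Qbd.of_summand {M N : ModuleCat.{u} R} (h : IsSummand R N M) {t : ℕ}
    (hM : Qbd R t M) : Qbd R t N := by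
  obtain ⟨i, p, hip⟩ := h
  refine Qbd.of_inj i (fun a b hab => ?_) hM
  have := congrArg p hab
  simpa [← LinearMap.comp_apply, hip] using this

theorem Qbd.addClosure {T : Set (ModuleCat.{u} R)} {t : ℕ}
    (hT : ∀ M ∈ T, Qbd R t M) : ∀ M, AddClosure R T M → Qbd R t M := by
  intro M h
  induction h with
  | of h => exact hT _ h
  | prod _ _ ih1 ih2 => exact ih1.prod ih2
  | summand _ hs ih => exact Qbd.of_summand hs ih

theorem Qbd.of_isSyzygy {M K : ModuleCat.{u} R} {t : ℕ} (hR : Qbd R t R)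
    (h : IsSyzygy R M K) : Qbd R t K := by
  obtain ⟨n, f, _, _, ⟨e⟩⟩ := h
  have h1 : Qbd R t (Fin n → R) := hR.pi (Fin n)
  have h2 : Qbd R t (LinearMap.ker f) :=
    Qbd.of_inj (LinearMap.ker f).subtype Subtype.coe_injective h1
  exact Qbd.of_inj e.toLinearMap e.injective h2

theorem Qbd.of_isNSyzygy {t : ℕ} (hR : Qbd R t R) :
    ∀ (i : ℕ) (M N : ModuleCat.{u} R), IsNSyzygy R i M N → Qbd R t M → Qbd R t N := by
  intro i
  induction i with
  | zero =>
    intro M N h hM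
    obtain ⟨e⟩ := h
    exact Qbd.of_inj e.toLinearMap e.injective hM
  | succ j ih =>
    intro M N h hM
    obtain ⟨K, hK, hN⟩ := h
    exact ih K N hN (Qbd.of_isSyzygy hR hK)

theorem qbd_bracket {S : Set (ModuleCat.{u} R)} {t : ℕ} (hR : Qbd R t R)
    (hS : ∀ M ∈ S, Qbd R t M) : ∀ M ∈ bracket R S, Qbd R t M := by
  intro M hM
  refine Qbd.addClosure ?_ M hM
  intro N hN
  rw [Set.mem_insert_iff] at hN
  rcases hN with rfl | ⟨M₀, hM₀, i, hi⟩
  · exact hR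
  · exact Qbd.of_isNSyzygy hR i M₀ N hi (hS M₀ hM₀)

theorem qbd_circOp {A B : Set (ModuleCat.{u} R)} {u v : ℕ}
    (hA : ∀ M ∈ A, Qbd R u M) (hB : ∀ M ∈ B, Qbd R v M) :
    ∀ M ∈ circOp R A B, Qbd R (u + v) M := by
  rintro M ⟨X₀, hX₀, Y₀, hY₀, hses⟩
  exact Qbd.ses hses (hA _ hX₀) (hB _ hY₀)

theorem qbd_ball {C : ModuleCat.{u} R} {t : ℕ} (hR : Qbd R t R) (hC : Qbd R t C) :
    ∀ n : ℕ, ∀ M ∈ ball R C (n + 1), Qbd R ((n + 1) * t) M := by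
  have hbr : ∀ M ∈ bracket R {C}, Qbd R t M := by
    refine qbd_bracket hR ?_
    intro N hN
    rw [Set.mem_singleton_iff] at hN
    subst hN
    exact hC
  intro n
  induction n with
  | zero =>
    intro M hM
    have : Qbd R t M := hbr M hM
    exact this.mono (by omega)
  | succ m ih =>
    intro M hM
    have h1 : ∀ N ∈ circOp R (ball R C (m + 1)) (bracket R {C}), Qbd R ((m + 1) * t + t) N :=
      qbd_circOp ih hbr
    have hR' : Qbd R ((m + 1) * t + t) R := hR.mono (Nat.le_add_left t _)
    have h2 : ∀ N ∈ bracket R (circOp R (ball R C (m + 1)) (bracket R {C})),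
        Qbd R ((m + 1) * t + t) N := qbd_bracket hR' h1
    have hM' : M ∈ bracket R (circOp R (ball R C (m + 1)) (bracket R {C})) := hM
    exact (h2 M hM').mono (by ring_nf; omega)

end BallQbd

section Xmem
variable {R : Type u} [CommRing R] [IsLocalRing R]
variable {X : Set (ModuleCat.{u} R)}

theorem mem_of_iso (hX : IsResolving R X) {M : ModuleCat.{u} R} (hM : M ∈ X)
    (N : ModuleCat.{u} R) (e : N ≃ₗ[R] M) : N ∈ X := by
  refine hX.2.2.1 M hM N ⟨e.toLinearMap, e.symm.toLinearMap, ?_⟩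
  ext x
  simp

theorem subsingleton_mem (hX : IsResolving R X) (N : ModuleCat.{u} R)
    (h : Subsingleton N) : N ∈ X := by
  refine hX.2.2.1 (ModuleCat.of R R) hX.2.1 N ⟨0, 0, ?_⟩
  ext x
  exact Subsingleton.elim _ _

theorem mem_of_m_torsion (hX : IsResolving R X)
    (hk : ModuleCat.of R (ResidueField R) ∈ X) :
    ∀ (n : ℕ) (V : Type u) [AddCommGroup V] [Module R V],
      (∃ s : Fin n → V, Submodule.span R (Set.range s) = ⊤) →
      (∀ c ∈ maximalIdeal R, ∀ v : V, c • v = 0) → ModuleCat.of R V ∈ X := by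
  intro n
  induction n with
  | zero =>
    intro V _ _ hs _
    obtain ⟨s, hs⟩ := hs
    refine subsingleton_mem hX _ ?_
    have hempty : Set.range s = ∅ := Set.range_eq_empty s
    rw [hempty, Submodule.span_empty] at hs
    constructor
    intro a b
    have ha : a ∈ (⊥ : Submodule R V) := hs ▸ Submodule.mem_top
    have hb : b ∈ (⊥ : Submodule R V) := hs ▸ Submodule.mem_top
    rw [Submodule.mem_bot] at ha hb
    rw [ha, hb]
  | succ m ih =>
    intro V _ _ hs hm
    obtain ⟨s, hs⟩ := hs
    set φ := LinearMap.toSpanSingleton R V (s 0) with hφ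
    set W := LinearMap.range φ with hW
    have hs0W : s 0 ∈ W := ⟨1, by simp [hφ]⟩
    have hker : maximalIdeal R ≤ LinearMap.ker φ := by
      intro c hc
      simp only [LinearMap.mem_ker, hφ, LinearMap.toSpanSingleton_apply]
      exact hm c hc (s 0)
    -- W ∈ X
    have hWX : ModuleCat.of R W ∈ X := by
      rcases eq_or_ne (LinearMap.ker φ) ⊤ with h | h
      · refine subsingleton_mem hX _ ?_
        have : φ = 0 := LinearMap.ker_eq_top.mp h
        constructor
        rintro ⟨a, x, rfl⟩ ⟨b, y, rfl⟩
        simp [this]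
      · have hkm : LinearMap.ker φ = maximalIdeal R :=
          ((IsLocalRing.maximalIdeal.isMaximal R).eq_of_le h hker).symm
        have e : (R ⧸ LinearMap.ker φ) ≃ₗ[R] W := φ.quotKerEquivRange
        rw [hkm] at e
        exact mem_of_iso hX hk _ e.symm
    -- quotient ∈ X
    have hQX : ModuleCat.of R (V ⧸ W) ∈ X := by
      refine ih (V ⧸ W) ⟨fun i => W.mkQ (s i.succ), ?_⟩ ?_
      · have hmk : Submodule.span R (W.mkQ '' Set.range s) = ⊤ := by
          rw [← Submodule.map_span, hs, Submodule.map_top, Submodule.range_mkQ]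
        refine top_unique ?_
        rw [← hmk]
        rw [Submodule.span_le]
        rintro x ⟨y, ⟨i, rfl⟩, rfl⟩
        induction i using Fin.cases with
        | zero =>
          have : W.mkQ (s 0) = 0 := by
            rw [Submodule.mkQ_apply, Submodule.Quotient.mk_eq_zero]
            exact hs0W
          rw [this]
          exact Submodule.zero_mem _
        | succ j =>
          exact Submodule.subset_span ⟨j, rfl⟩
      · intro c hc v
        obtain ⟨x, rfl⟩ := W.mkQ_surjective v
        rw [Submodule.mkQ_apply, ← Submodule.Quotient.mk_smul, hm c hc x]
        rfl
    -- SES 0 → W → V → V/W → 0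
    refine hX.2.2.2.1 (ModuleCat.of R W) (ModuleCat.of R V) (ModuleCat.of R (V ⧸ W))
      ⟨W.subtype, W.mkQ, Submodule.injective_subtype W, W.mkQ_surjective, ?_⟩ hWX hQX
    rw [Submodule.ker_mkQ, Submodule.range_subtype]

theorem quot_pow_mem (hX : IsResolving R X) [IsNoetherianRing R]
    (hk : ModuleCat.of R (ResidueField R) ∈ X) (j : ℕ) :
    ModuleCat.of R (R ⧸ (maximalIdeal R ^ (j + 1) : Ideal R)) ∈ X := by
  induction j with
  | zero =>
    refine mem_of_m_torsion hX hk 1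
      (R ⧸ (maximalIdeal R ^ 1 : Ideal R))
      ⟨fun _ => Submodule.Quotient.mk 1, ?_⟩ ?_
    · refine top_unique ?_
      intro x _
      obtain ⟨r, rfl⟩ := Submodule.Quotient.mk_surjective _ x
      have : (Submodule.Quotient.mk r : R ⧸ (maximalIdeal R ^ 1 : Ideal R)) =
          r • Submodule.Quotient.mk 1 := by
        rw [← Submodule.Quotient.mk_smul, smul_eq_mul, mul_one]
      rw [this]
      exact Submodule.smul_mem _ r (Submodule.subset_span ⟨0, rfl⟩)
    · intro c hc v
      obtain ⟨r, rfl⟩ := Submodule.Quotient.mk_surjective _ v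
      rw [← Submodule.Quotient.mk_smul, Submodule.Quotient.mk_eq_zero, pow_one,
        smul_eq_mul]
      exact Ideal.mul_mem_right r _ hc
  | succ i ihj =>
    have hle : (maximalIdeal R ^ (i + 2) : Ideal R) ≤ maximalIdeal R ^ (i + 1) :=
      Ideal.pow_le_pow_right (by omega)
    set g : (R ⧸ (maximalIdeal R ^ (i + 2) : Ideal R)) →ₗ[R]
        (R ⧸ (maximalIdeal R ^ (i + 1) : Ideal R)) :=
      Submodule.mapQ _ _ LinearMap.id hle with hg
    have hgsurj : Function.Surjective g := by
      intro y
      obtain ⟨r, rfl⟩ := Submodule.Quotient.mk_surjective _ y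
      exact ⟨Submodule.Quotient.mk r, by rw [hg, Submodule.mapQ_apply, LinearMap.id_apply]⟩
    -- the kernel is killed by m
    have hLX : ModuleCat.of R (LinearMap.ker g) ∈ X := by
      have hfin : Module.Finite R (LinearMap.ker g) :=
        Module.Finite.iff_fg.mpr (IsNoetherian.noetherian _)
      obtain ⟨nn, ss, hss⟩ := Module.Finite.exists_fin (R := R) (M := LinearMap.ker g)
      refine mem_of_m_torsion hX hk nn (LinearMap.ker g) ⟨ss, hss⟩ ?_
      intro c hc v
      obtain ⟨x, hxker⟩ := v
      obtain ⟨r, rfl⟩ := Submodule.Quotient.mk_surjective _ x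
      have hr : r ∈ (maximalIdeal R ^ (i + 1) : Ideal R) := by
        have : g (Submodule.Quotient.mk r) = 0 := hxker
        rw [hg, Submodule.mapQ_apply, LinearMap.id_apply,
          Submodule.Quotient.mk_eq_zero] at this
        exact this
      apply Subtype.ext
      show c • (Submodule.Quotient.mk r : R ⧸ (maximalIdeal R ^ (i + 2) : Ideal R)) = 0
      rw [← Submodule.Quotient.mk_smul, Submodule.Quotient.mk_eq_zero, smul_eq_mul]
      have : c * r ∈ maximalIdeal R * maximalIdeal R ^ (i + 1) :=
        Ideal.mul_mem_mul hc hr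
      rwa [← pow_succ'] at this
    refine hX.2.2.2.1 (ModuleCat.of R (LinearMap.ker g))
      (ModuleCat.of R (R ⧸ (maximalIdeal R ^ (i + 2) : Ideal R)))
      (ModuleCat.of R (R ⧸ (maximalIdeal R ^ (i + 1) : Ideal R)))
      ⟨(LinearMap.ker g).subtype, g, Submodule.injective_subtype _, hgsurj, ?_⟩ hLX ihj
    rw [Submodule.range_subtype]

end Xmem

/-- A resolving subcategory of `mod R` containing the residue field
of a Noetherian local ring of positive dimension has infinite radius. -/
theorem radius_infinite_of_residueField_mem
    (R : Type u) [CommRing R] [IsNoetherianRing R] [IsLocalRing R]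
    (hdim : 0 < ringKrullDim R)
    (X : Set (ModuleCat.{u} R)) (hX : IsResolving R X)
    (hk : ModuleCat.of R (ResidueField R) ∈ X) :
    ∀ (C : ModuleCat.{u} R) (n : ℕ), Module.Finite R C → ¬ X ⊆ ball R C (n + 1) := by
  intro C n hC hsub
  haveI := hC
  obtain ⟨tR, htR⟩ := Qbd.exists (R := R) (M := R)
  obtain ⟨tC, htC⟩ := Qbd.exists (R := R) (M := C)
  set t := max tR tC with ht
  have hRb : Qbd R t R := htR.mono (le_max_left _ _)
  have hCb : Qbd R t C := htC.mono (le_max_right _ _)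
  set B := (n + 1) * t with hB
  set W : ModuleCat.{u} R := ModuleCat.of R (R ⧸ (maximalIdeal R ^ (B + 1) : Ideal R))
    with hWdef
  have hWX : W ∈ X := quot_pow_mem hX hk B
  have hWb : Qbd R B W := qbd_ball hRb hCb n W (hsub hWX)
  -- m^B ≤ m^(B+1)
  have hle : (maximalIdeal R ^ B : Ideal R) ≤ maximalIdeal R ^ (B + 1) := by
    intro c hc
    have h0 : c • (Submodule.Quotient.mk 1 :
        R ⧸ (maximalIdeal R ^ (B + 1) : Ideal R)) = 0 := by
      refine hWb (Submodule.Quotient.mk 1) ⟨B + 1, fun d hd => ?_⟩ c hc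
      rw [← Submodule.Quotient.mk_smul, Submodule.Quotient.mk_eq_zero, smul_eq_mul, mul_one]
      exact hd
    rw [← Submodule.Quotient.mk_smul, Submodule.Quotient.mk_eq_zero, smul_eq_mul,
      mul_one] at h0
    exact h0
  have hfg : (maximalIdeal R ^ B : Ideal R).FG := IsNoetherian.noetherian _
  have hsmul : (maximalIdeal R ^ B : Ideal R) ≤
      maximalIdeal R • (maximalIdeal R ^ B : Ideal R) := by
    rw [smul_eq_mul, ← pow_succ']
    exact hle
  have hbot : (maximalIdeal R ^ B : Ideal R) = ⊥ :=
    Submodule.eq_bot_of_le_smul_of_le_jacobson_bot (maximalIdeal R) _ hfg hsmul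
      (IsLocalRing.maximalIdeal_le_jacobson ⊥)
  -- every prime equals the maximal ideal
  have hss : Subsingleton (PrimeSpectrum R) := by
    have key : ∀ p : PrimeSpectrum R, p.asIdeal = maximalIdeal R := by
      intro p
      refine le_antisymm (IsLocalRing.le_maximalIdeal p.isPrime.ne_top) ?_
      intro c hc
      have h1 : c ^ B ∈ (maximalIdeal R ^ B : Ideal R) := Ideal.pow_mem_pow hc B
      rw [hbot, Ideal.mem_bot] at h1
      exact p.isPrime.mem_of_pow_mem B (h1 ▸ p.asIdeal.zero_mem)
    exact ⟨fun p q => PrimeSpectrum.ext ((key p).trans (key q).symm)⟩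
  have hd0 : ringKrullDim R ≤ 0 := Order.krullDim_nonpos_of_subsingleton
  exact absurd hdim (not_lt.mpr hd0)
end

section
/- Let (R,m,k) be a commutative Noetherian local ring of positive depth, and let X be a resolving subcategory of mod R containing the Auslander transpose Tr k of the residue field. Then for every finitely generated R-module L of finite length, Tr L belongs to X. -/
/-!
Induct along a composition series of `L`. Given `0 → N → M → k → 0`, presentations of `N` and `k`
assemble (horseshoe) into a presentation of `M` with block-triangular relation matrix. A regular
element of `𝔪` shows `Hom(N, R) = 0`, so dualizing yields an exact sequence
`0 → Tr k → Tr' M → Tr N → 0`, where `Tr' M` is computed from this possibly non-minimal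
presentation; hence `Tr' M ∈ X`. Comparing with a minimal presentation, Nakayama's lemma makes the
induced endomorphism of the minimal presentation an automorphism, so `Tr M` is a direct summand
of `Tr' M`.
-/

open CategoryTheory IsLocalRing

universe u

open LinearMap Function

section Nakayama

variable {R M : Type*} [CommRing R] [AddCommGroup M] [Module R M] [Module.Finite R M]

theorem LinearMap.bijective_of_sub_mem_jacobson_smul (α : M →ₗ[R] M)
    (h : ∀ x, α x - x ∈ (⊥ : Ideal R).jacobson • (⊤ : Submodule R M)) : Bijective α := by
  refine OrzechProperty.bijective_of_surjective_endomorphism α ?_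
  rw [← range_eq_top, eq_top_iff]
  refine Submodule.le_of_le_smul_of_le_jacobson_bot Module.Finite.fg_top le_rfl fun x _ => ?_
  rw [← sub_sub_cancel (α x) x]
  exact sub_mem (Submodule.mem_sup_left (mem_range_self α x)) (Submodule.mem_sup_right (h x))

end Nakayama

section DualCoker

variable {R : Type*} [CommRing R] {E₀ E₁ F₀ F₁ G₀ G₁ : Type*}
  [AddCommGroup E₀] [Module R E₀] [AddCommGroup E₁] [Module R E₁]
  [AddCommGroup F₀] [Module R F₀] [AddCommGroup F₁] [Module R F₁]
  [AddCommGroup G₀] [Module R G₀] [AddCommGroup G₁] [Module R G₁]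

/-- For a presentation `E₁ → E₀ → M → 0` this is the transpose of `M`. -/
abbrev dualCoker (d : E₁ →ₗ[R] E₀) : Type _ := Module.Dual R E₁ ⧸ range d.dualMap

def dualCokerMap {d : E₁ →ₗ[R] E₀} {d' : F₁ →ₗ[R] F₀} {f₀ : E₀ →ₗ[R] F₀} {f₁ : E₁ →ₗ[R] F₁}
    (h : d' ∘ₗ f₁ = f₀ ∘ₗ d) : dualCoker d' →ₗ[R] dualCoker d :=
  (range d'.dualMap).mapQ (range d.dualMap) f₁.dualMap <| by
    rintro _ ⟨γ, rfl⟩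
    exact ⟨f₀.dualMap γ, LinearMap.ext fun x => congrArg γ (LinearMap.congr_fun h x).symm⟩

variable {d : E₁ →ₗ[R] E₀} {d' : F₁ →ₗ[R] F₀} {d'' : G₁ →ₗ[R] G₀}
  {f₀ : E₀ →ₗ[R] F₀} {f₁ : E₁ →ₗ[R] F₁} {g₀ : F₀ →ₗ[R] G₀} {g₁ : F₁ →ₗ[R] G₁}

@[simp]
theorem dualCokerMap_mk (h : d' ∘ₗ f₁ = f₀ ∘ₗ d) (γ : Module.Dual R F₁) :
    dualCokerMap h (Submodule.Quotient.mk γ) = Submodule.Quotient.mk (f₁.dualMap γ) :=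
  rfl

theorem dualCokerMap_comp (h : d' ∘ₗ f₁ = f₀ ∘ₗ d) (h' : d'' ∘ₗ g₁ = g₀ ∘ₗ d') :
    dualCokerMap h ∘ₗ dualCokerMap h' =
      dualCokerMap (f₀ := g₀ ∘ₗ f₀) (f₁ := g₁ ∘ₗ f₁)
        (by rw [← LinearMap.comp_assoc, h', LinearMap.comp_assoc, h, LinearMap.comp_assoc]) := by
  ext γ
  rfl

theorem dualCokerMap_bijective (h : d' ∘ₗ f₁ = f₀ ∘ₗ d) (hf₀ : Bijective f₀)
    (hf₁ : Bijective f₁) : Bijective (dualCokerMap h) := by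
  have hf₀' : range f₀.dualMap = ⊤ :=
    range_eq_top.mpr (LinearEquiv.ofBijective f₀ hf₀).dualMap.surjective
  have hmap : (range d'.dualMap).map (LinearEquiv.ofBijective f₁ hf₁).dualMap.toLinearMap =
      range d.dualMap := by
    rw [← range_comp]
    change range (f₁.dualMap ∘ₗ d'.dualMap) = _
    rw [dualMap_comp_dualMap, h, ← dualMap_comp_dualMap, range_comp_of_range_eq_top _ hf₀']
  exact (Submodule.Quotient.equiv _ _ _ hmap).bijective

end DualCoker

section Comparison

variable {R : Type*} [CommRing R] {M P A B : Type*}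
  [AddCommGroup M] [Module R M] [AddCommGroup P] [Module R P]
  [AddCommGroup A] [Module R A] [AddCommGroup B] [Module R B]

theorem Module.Projective.exists_comp_eq_of_range_le [Module.Projective R P] (g : A →ₗ[R] B)
    (f : P →ₗ[R] B) (h : range f ≤ range g) : ∃ f' : P →ₗ[R] A, g ∘ₗ f' = f := by
  obtain ⟨f', hf'⟩ := Module.projective_lifting_property g.rangeRestrict
    (f.codRestrict (range g) fun x => h (mem_range_self f x)) g.surjective_rangeRestrict
  exact ⟨f', LinearMap.ext fun x => congrArg Subtype.val (LinearMap.congr_fun hf' x)⟩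

variable {F₀ F₁ E₀ E₁ : Type*}
  [AddCommGroup F₀] [Module R F₀] [AddCommGroup F₁] [Module R F₁]
  [AddCommGroup E₀] [Module R E₀] [AddCommGroup E₁] [Module R E₁]

theorem exists_presentation_hom [Module.Projective R F₀] [Module.Projective R F₁]
    {d : F₁ →ₗ[R] F₀} {p : F₀ →ₗ[R] M} (hpd : p ∘ₗ d = 0)
    {e : E₁ →ₗ[R] E₀} {q : E₀ →ₗ[R] M} (hq : Surjective q) (heq : Exact e q) :
    ∃ (φ₀ : F₀ →ₗ[R] E₀) (φ₁ : F₁ →ₗ[R] E₁), q ∘ₗ φ₀ = p ∧ e ∘ₗ φ₁ = φ₀ ∘ₗ d := by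
  obtain ⟨φ₀, hφ₀⟩ := Module.projective_lifting_property q p hq
  obtain ⟨φ₁, hφ₁⟩ := Module.Projective.exists_comp_eq_of_range_le e (φ₀ ∘ₗ d) <| by
    rintro _ ⟨x, rfl⟩
    refine (heq _).mp ?_
    rw [← LinearMap.comp_apply q, ← LinearMap.comp_assoc, hφ₀, hpd, LinearMap.zero_apply]
  exact ⟨φ₀, φ₁, hφ₀, hφ₁⟩

theorem bijective_of_comp_eq_of_minimal [Module.Projective R F₀] [Module.Finite R F₀]
    [Module.Finite R F₁] {d : F₁ →ₗ[R] F₀} {p : F₀ →ₗ[R] M} (hdp : Exact d p)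
    (hp : ker p ≤ (⊥ : Ideal R).jacobson • ⊤) (hd : ker d ≤ (⊥ : Ideal R).jacobson • ⊤)
    {α₀ : F₀ →ₗ[R] F₀} {α₁ : F₁ →ₗ[R] F₁} (hα₀ : p ∘ₗ α₀ = p) (hα : d ∘ₗ α₁ = α₀ ∘ₗ d) :
    Bijective α₀ ∧ Bijective α₁ := by
  have hα₀_sub : ∀ x, α₀ x - x ∈ ker p := fun x => by
    rw [mem_ker, map_sub, ← LinearMap.comp_apply p, hα₀, sub_self]
  -- `α₀ - id` lands in `ker p = range d`, so it lifts through `d`; this controls `α₁ - id`.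
  obtain ⟨h, hh⟩ := Module.Projective.exists_comp_eq_of_range_le d (α₀ - LinearMap.id) <| by
    rintro _ ⟨x, rfl⟩
    exact (hdp _).mp (hα₀_sub x)
  refine ⟨α₀.bijective_of_sub_mem_jacobson_smul fun x => hp (hα₀_sub x),
    α₁.bijective_of_sub_mem_jacobson_smul fun x => ?_⟩
  have hker : α₁ x - x - h (d x) ∈ ker d := by
    rw [mem_ker, map_sub, map_sub, ← LinearMap.comp_apply d α₁, hα, ← LinearMap.comp_apply d h,
      hh, LinearMap.comp_apply, LinearMap.sub_apply, LinearMap.id_apply,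
      sub_sub_sub_cancel_right, sub_self]
  have hdx : d x ∈ (⊥ : Ideal R).jacobson • (⊤ : Submodule R F₀) :=
    hp ((hdp _).mpr ⟨x, rfl⟩)
  rw [← sub_add_cancel (α₁ x - x) (h (d x))]
  exact add_mem (hd hker) (Submodule.smul_top_le_comap_smul_top _ h hdx)

end Comparison

theorem isSummand_dualCoker_of_minimal {R : Type u} [CommRing R] {M F₀ F₁ E₀ E₁ : Type u}
    [AddCommGroup M] [Module R M]
    [AddCommGroup F₀] [Module R F₀] [Module.Projective R F₀] [Module.Finite R F₀]
    [AddCommGroup F₁] [Module R F₁] [Module.Projective R F₁] [Module.Finite R F₁]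
    [AddCommGroup E₀] [Module R E₀] [Module.Projective R E₀]
    [AddCommGroup E₁] [Module R E₁] [Module.Projective R E₁]
    {d : F₁ →ₗ[R] F₀} {p : F₀ →ₗ[R] M} (hp : Surjective p) (hdp : Exact d p)
    (hp_min : ker p ≤ (⊥ : Ideal R).jacobson • ⊤) (hd_min : ker d ≤ (⊥ : Ideal R).jacobson • ⊤)
    {e : E₁ →ₗ[R] E₀} {q : E₀ →ₗ[R] M} (hq : Surjective q) (heq : Exact e q) :
    IsSummand R (ModuleCat.of R (dualCoker d)) (ModuleCat.of R (dualCoker e)) := by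
  obtain ⟨φ₀, φ₁, hφ₀, hφ⟩ := exists_presentation_hom hdp.linearMap_comp_eq_zero hq heq
  obtain ⟨ψ₀, ψ₁, hψ₀, hψ⟩ := exists_presentation_hom heq.linearMap_comp_eq_zero hp hdp
  have hα : d ∘ₗ (ψ₁ ∘ₗ φ₁) = (ψ₀ ∘ₗ φ₀) ∘ₗ d := by
    rw [← LinearMap.comp_assoc, hψ, LinearMap.comp_assoc, hφ, LinearMap.comp_assoc]
  have hα₀ : p ∘ₗ (ψ₀ ∘ₗ φ₀) = p := by rw [← LinearMap.comp_assoc, hψ₀, hφ₀]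
  obtain ⟨hα₀_bij, hα₁_bij⟩ := bijective_of_comp_eq_of_minimal hdp hp_min hd_min hα₀ hα
  -- The composite `Tr M → coker e* → Tr M` comes from an automorphism of the minimal presentation.
  let θ := LinearEquiv.ofBijective _ (dualCokerMap_bijective hα hα₀_bij hα₁_bij)
  refine ⟨dualCokerMap hψ ∘ₗ θ.symm.toLinearMap, dualCokerMap hφ, ?_⟩
  rw [← LinearMap.comp_assoc, dualCokerMap_comp hφ hψ]
  exact LinearMap.ext θ.apply_symm_apply

section BlockTriangular

variable {R : Type*} [CommRing R] {A₀ A₁ B₀ B₁ : Type*}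
  [AddCommGroup A₀] [Module R A₀] [AddCommGroup A₁] [Module R A₁]
  [AddCommGroup B₀] [Module R B₀] [AddCommGroup B₁] [Module R B₁]

/-- The block matrix `[[dA, τ], [0, dB]]`. -/
def blockTriangular (dA : A₁ →ₗ[R] A₀) (τ : B₁ →ₗ[R] A₀) (dB : B₁ →ₗ[R] B₀) :
    A₁ × B₁ →ₗ[R] A₀ × B₀ :=
  (dA.coprod τ).prod (dB ∘ₗ snd R A₁ B₁)

variable (dA : A₁ →ₗ[R] A₀) (τ : B₁ →ₗ[R] A₀) (dB : B₁ →ₗ[R] B₀)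

@[simp]
theorem blockTriangular_apply (z : A₁ × B₁) :
    blockTriangular dA τ dB z = (dA z.1 + τ z.2, dB z.2) :=
  rfl

theorem blockTriangular_snd : dB ∘ₗ snd R A₁ B₁ = snd R A₀ B₀ ∘ₗ blockTriangular dA τ dB :=
  rfl

theorem blockTriangular_inl : blockTriangular dA τ dB ∘ₗ inl R A₁ B₁ = inl R A₀ B₀ ∘ₗ dA := by
  ext x <;> simp

variable {N L S : Type*} [AddCommGroup N] [Module R N] [AddCommGroup L] [Module R L]
  [AddCommGroup S] [Module R S] {ι : N →ₗ[R] L} {π : L →ₗ[R] S}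
  {pA : A₀ →ₗ[R] N} {pB : B₀ →ₗ[R] S} {σ : B₀ →ₗ[R] L}

theorem surjective_coprod_of_exact (hιπ : Exact ι π) (hpA : Surjective pA) (hσ : π ∘ₗ σ = pB)
    (hpB : Surjective pB) : Surjective ((ι ∘ₗ pA).coprod σ) := by
  intro l
  obtain ⟨b, hb⟩ := hpB (π l)
  obtain ⟨n, hn⟩ := (hιπ (l - σ b)).mp <| by
    rw [map_sub, ← LinearMap.comp_apply π σ, hσ, hb, sub_self]
  obtain ⟨a, rfl⟩ := hpA n
  exact ⟨(a, b), by simp [hn]⟩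

theorem exact_blockTriangular_coprod (hι : Injective ι) (hιπ : Exact ι π) (hA : Exact dA pA)
    (hB : Exact dB pB) (hσ : π ∘ₗ σ = pB) (hτ : ι ∘ₗ pA ∘ₗ τ = -(σ ∘ₗ dB)) :
    Exact (blockTriangular dA τ dB) ((ι ∘ₗ pA).coprod σ) := by
  have hτ' (y : B₁) : ι (pA (τ y)) = -σ (dB y) := LinearMap.congr_fun hτ y
  intro z
  constructor
  · obtain ⟨a, b⟩ := z
    intro hab
    simp only [coprod_apply, LinearMap.comp_apply] at hab
    obtain ⟨y, rfl⟩ := (hB b).mp <| by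
      rw [← hσ, LinearMap.comp_apply, eq_neg_of_add_eq_zero_right hab, map_neg,
        hιπ.apply_apply_eq_zero, neg_zero]
    obtain ⟨x, hx⟩ := (hA (a - τ y)).mp <| hι <| by
      rw [map_sub, map_sub, hτ', sub_neg_eq_add, hab, map_zero]
    exact ⟨(x, y), by simp [hx]⟩
  · rintro ⟨⟨x, y⟩, rfl⟩
    simp [hτ', hA.apply_apply_eq_zero]

end BlockTriangular

section Horseshoe

variable {R : Type*} [CommRing R] {A₀ A₁ B₀ B₁ : Type*}
  [AddCommGroup A₀] [Module R A₀] [AddCommGroup A₁] [Module R A₁]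
  [AddCommGroup B₀] [Module R B₀] [AddCommGroup B₁] [Module R B₁]
  {N L S : Type*} [AddCommGroup N] [Module R N] [AddCommGroup L] [Module R L]
  [AddCommGroup S] [Module R S]

theorem exists_blockTriangular_presentation [Module.Projective R B₀] [Module.Projective R B₁]
    {ι : N →ₗ[R] L} {π : L →ₗ[R] S} (hι : Injective ι) (hπ : Surjective π) (hιπ : Exact ι π)
    {dA : A₁ →ₗ[R] A₀} {pA : A₀ →ₗ[R] N} (hpA : Surjective pA) (hA : Exact dA pA)
    {dB : B₁ →ₗ[R] B₀} {pB : B₀ →ₗ[R] S} (hpB : Surjective pB) (hB : Exact dB pB) :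
    ∃ (τ : B₁ →ₗ[R] A₀) (q : A₀ × B₀ →ₗ[R] L),
      Surjective q ∧ Exact (blockTriangular dA τ dB) q := by
  obtain ⟨σ, hσ⟩ := Module.projective_lifting_property π pB hπ
  obtain ⟨τ, hτ⟩ := Module.Projective.exists_comp_eq_of_range_le (ι ∘ₗ pA) (-(σ ∘ₗ dB)) <| by
    rintro _ ⟨y, rfl⟩
    obtain ⟨n, hn⟩ := (hιπ ((-(σ ∘ₗ dB)) y)).mp <| by
      rw [LinearMap.neg_apply, map_neg, LinearMap.comp_apply, ← LinearMap.comp_apply π σ, hσ,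
        hB.apply_apply_eq_zero, neg_zero]
    obtain ⟨a, rfl⟩ := hpA n
    exact ⟨a, hn⟩
  exact ⟨τ, (ι ∘ₗ pA).coprod σ, surjective_coprod_of_exact hιπ hpA hσ hpB,
    exact_blockTriangular_coprod dA τ dB hι hιπ hA hB hσ hτ⟩

end Horseshoe

section DualHorseshoe

variable {R : Type*} [CommRing R] {A₀ A₁ B₀ B₁ : Type*}
  [AddCommGroup A₀] [Module R A₀] [AddCommGroup A₁] [Module R A₁]
  [AddCommGroup B₀] [Module R B₀] [AddCommGroup B₁] [Module R B₁]
  (dA : A₁ →ₗ[R] A₀) (τ : B₁ →ₗ[R] A₀) (dB : B₁ →ₗ[R] B₀)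

theorem Module.Dual.apply_prod {M₁ M₂ : Type*} [AddCommGroup M₁] [Module R M₁] [AddCommGroup M₂]
    [Module R M₂] (δ : Module.Dual R (M₁ × M₂)) (a : M₁) (b : M₂) :
    δ (a, b) = δ (inl R M₁ M₂ a) + δ (inr R M₁ M₂ b) := by
  rw [← map_add, inl_apply, inr_apply, Prod.mk_add_mk, add_zero, zero_add]

theorem injective_dualCokerMap_blockTriangular_snd (hA : Injective dA.dualMap) :
    Injective (dualCokerMap (blockTriangular_snd dA τ dB)) := by
  rw [injective_iff_map_eq_zero]
  intro u hu
  obtain ⟨β, rfl⟩ := Submodule.Quotient.mk_surjective _ u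
  rw [dualCokerMap_mk, Submodule.Quotient.mk_eq_zero] at hu
  obtain ⟨δ, hδ⟩ := hu
  have hδ' (a : A₁) (b : B₁) : δ (dA a + τ b, dB b) = β b := LinearMap.congr_fun hδ (a, b)
  have hinl : δ ∘ₗ inl R A₀ B₀ = 0 := hA <| LinearMap.ext fun a => by
    simpa using hδ' a 0
  rw [Submodule.Quotient.mk_eq_zero]
  refine ⟨δ ∘ₗ inr R A₀ B₀, LinearMap.ext fun b => ?_⟩
  have hinl_τ : δ (inl R A₀ B₀ (τ b)) = 0 := LinearMap.congr_fun hinl (τ b)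
  have h := hδ' 0 b
  rwa [map_zero, zero_add, Module.Dual.apply_prod, hinl_τ, zero_add] at h

theorem surjective_dualCokerMap_blockTriangular_inl :
    Surjective (dualCokerMap (blockTriangular_inl dA τ dB)) := by
  intro u
  obtain ⟨γ, rfl⟩ := Submodule.Quotient.mk_surjective _ u
  exact ⟨Submodule.Quotient.mk (γ ∘ₗ fst R A₁ B₁), rfl⟩

theorem exact_dualCokerMap_blockTriangular :
    Exact (dualCokerMap (blockTriangular_snd dA τ dB))
      (dualCokerMap (blockTriangular_inl dA τ dB)) := by
  have hcomp : dualCokerMap (blockTriangular_inl dA τ dB) ∘ₗ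
      dualCokerMap (blockTriangular_snd dA τ dB) = 0 := by
    ext β
    exact (Submodule.Quotient.mk_eq_zero _).mpr ⟨0, LinearMap.ext fun a => by simp⟩
  refine exact_of_comp_of_mem_range hcomp fun u hu => ?_
  obtain ⟨γ, rfl⟩ := Submodule.Quotient.mk_surjective _ u
  rw [dualCokerMap_mk, Submodule.Quotient.mk_eq_zero] at hu
  obtain ⟨v, hv⟩ := hu
  set γ' := γ - (blockTriangular dA τ dB).dualMap (v ∘ₗ fst R A₀ B₀)
  have hγ' (a : A₁) : γ' (inl R A₁ B₁ a) = 0 := by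
    simpa [γ', sub_eq_zero] using (LinearMap.congr_fun hv a).symm
  have hγ'_snd : (snd R A₁ B₁).dualMap (γ' ∘ₗ inr R A₁ B₁) = γ' := LinearMap.ext fun z => by
    rw [← Prod.mk.eta (p := z), Module.Dual.apply_prod γ', hγ', zero_add]
    rfl
  refine ⟨Submodule.Quotient.mk (γ' ∘ₗ inr R A₁ B₁), ?_⟩
  rw [dualCokerMap_mk, hγ'_snd, Submodule.Quotient.eq]
  exact ⟨-(v ∘ₗ fst R A₀ B₀), by rw [map_neg, sub_sub_cancel_left]⟩

end DualHorseshoe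

section LocalRing

variable {R : Type*} [CommRing R] [IsLocalRing R]

theorem IsSimpleModule.nonempty_linearEquiv_residueField (S : Type*) [AddCommGroup S]
    [Module R S] [IsSimpleModule R S] : Nonempty (ResidueField R ≃ₗ[R] S) := by
  obtain ⟨I, hI, ⟨e⟩⟩ := isSimpleModule_iff_quot_maximal.mp ‹IsSimpleModule R S›
  obtain rfl := eq_maximalIdeal hI
  exact ⟨e.symm⟩

theorem IsSimpleModule.smul_eq_zero_of_mem_maximalIdeal {S : Type*} [AddCommGroup S] [Module R S]
    [IsSimpleModule R S] {r : R} (hr : r ∈ maximalIdeal R) (x : S) : r • x = 0 := by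
  rw [← eq_maximalIdeal (IsSimpleModule.annihilator_isMaximal (M := S))] at hr
  exact Module.mem_annihilator.mp hr x

theorem dual_eq_zero_of_isFiniteLength {r : R} (hr : r ∈ maximalIdeal R)
    (hreg : IsSMulRegular R r) {M : Type*} [AddCommGroup M] [Module R M]
    (hM : IsFiniteLength R M) (f : Module.Dual R M) : f = 0 := by
  induction hM with
  | of_subsingleton => exact Subsingleton.elim _ _
  | @of_simple_quotient M _ _ N _ _ ih =>
    ext x
    have hrx : r • x ∈ N := by
      rw [← Submodule.Quotient.mk_eq_zero, Submodule.Quotient.mk_smul]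
      exact IsSimpleModule.smul_eq_zero_of_mem_maximalIdeal hr _
    have hfrx : r • f x = 0 := by
      rw [← map_smul]
      exact LinearMap.congr_fun (ih (f ∘ₗ N.subtype)) ⟨r • x, hrx⟩
    exact hreg.right_eq_zero_of_smul hfrx

theorem exists_isSMulRegular_mem_maximalIdeal_of_mdepth_pos (h : 0 < mdepth R R) :
    ∃ r ∈ maximalIdeal R, IsSMulRegular R r := by
  obtain ⟨_, ⟨rs, rfl, hmem, hreg⟩, hpos⟩ := lt_sSup_iff.mp h
  match rs, hmem, hreg, hpos with
  | [], _, _, hpos => simp at hpos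
  | r :: rs, hmem, hreg, _ =>
    exact ⟨r, hmem r List.mem_cons_self,
      ((RingTheory.Sequence.isWeaklyRegular_cons_iff R r rs).mp hreg).1⟩

end LocalRing

section Transpose

variable {R : Type u} [CommRing R]

theorem ses_dualCoker_blockTriangular {A₀ A₁ B₀ B₁ : Type u}
    [AddCommGroup A₀] [Module R A₀] [AddCommGroup A₁] [Module R A₁]
    [AddCommGroup B₀] [Module R B₀] [AddCommGroup B₁] [Module R B₁]
    {dA : A₁ →ₗ[R] A₀} (τ : B₁ →ₗ[R] A₀) (dB : B₁ →ₗ[R] B₀) (hA : Injective dA.dualMap) :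
    SES R (ModuleCat.of R (dualCoker dB)) (ModuleCat.of R (dualCoker (blockTriangular dA τ dB)))
      (ModuleCat.of R (dualCoker dA)) :=
  ⟨_, _, injective_dualCokerMap_blockTriangular_snd dA τ dB hA,
    surjective_dualCokerMap_blockTriangular_inl dA τ dB,
    LinearMap.exact_iff.mp (exact_dualCokerMap_blockTriangular dA τ dB)⟩

theorem dualMap_injective_of_exact {M F₀ F₁ : Type*} [AddCommGroup M] [Module R M]
    [AddCommGroup F₀] [Module R F₀] [AddCommGroup F₁] [Module R F₁]
    {d : F₁ →ₗ[R] F₀} {p : F₀ →ₗ[R] M} (hp : Surjective p) (hdp : Exact d p)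
    (hM : ∀ f : Module.Dual R M, f = 0) : Injective d.dualMap := by
  rw [injective_iff_map_eq_zero]
  intro δ hδ
  have hδ_range : range d ≤ ker δ := by
    rintro _ ⟨x, rfl⟩
    exact LinearMap.congr_fun hδ x
  ext x
  -- `δ` factors through `F₀ ⧸ range d ≃ M`, whose dual vanishes.
  have h := LinearMap.congr_fun
    (hM ((range d).liftQ δ hδ_range ∘ₗ (hdp.linearEquivOfSurjective hp).symm.toLinearMap)) (p x)
  simpa using h

variable (X : Set (ModuleCat.{u} R))

def HasTransposeIn (M : Type*) [AddCommGroup M] [Module R M] : Prop :=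
  ∃ (E₀ E₁ : ModuleCat.{u} R) (e : E₁ →ₗ[R] E₀) (q : E₀ →ₗ[R] M),
    Module.Projective R E₀ ∧ Module.Projective R E₁ ∧ Surjective q ∧ Exact e q ∧
      ModuleCat.of R (dualCoker e) ∈ X

variable {X}

theorem IsResolving.mem_of_linearEquiv (hX : IsResolving R X) {M N : ModuleCat.{u} R}
    (hM : M ∈ X) (e : N ≃ₗ[R] M) : N ∈ X :=
  hX.2.2.1 M hM N ⟨e.toLinearMap, e.symm.toLinearMap, LinearMap.ext e.symm_apply_apply⟩

theorem IsResolving.mem_of_subsingleton (hX : IsResolving R X) (M : ModuleCat.{u} R)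
    [Subsingleton M] : M ∈ X :=
  hX.2.2.1 _ hX.2.1 M ⟨0, 0, Subsingleton.elim _ _⟩

theorem hasTransposeIn_of_subsingleton (hX : IsResolving R X) (M : Type*) [AddCommGroup M]
    [Module R M] [Subsingleton M] : HasTransposeIn X M :=
  ⟨ModuleCat.of R PUnit, ModuleCat.of R PUnit, 0, 0, inferInstance, inferInstance,
    fun _ => ⟨0, Subsingleton.elim _ _⟩, fun _ => by simp, hX.mem_of_subsingleton _⟩

theorem HasTransposeIn.of_linearEquiv {M M' : Type*} [AddCommGroup M] [Module R M]
    [AddCommGroup M'] [Module R M'] (h : HasTransposeIn X M) (g : M ≃ₗ[R] M') :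
    HasTransposeIn X M' := by
  obtain ⟨E₀, E₁, e, q, hE₀, hE₁, hq, heq, hX⟩ := h
  exact ⟨E₀, E₁, e, g.toLinearMap ∘ₗ q, hE₀, hE₁, g.surjective.comp hq,
    (g.postcomp_exact_iff_exact).mpr heq, hX⟩

theorem HasTransposeIn.of_exact (hX : IsResolving R X) {N M S : Type*} [AddCommGroup N]
    [Module R N] [AddCommGroup M] [Module R M] [AddCommGroup S] [Module R S]
    {ι : N →ₗ[R] M} {π : M →ₗ[R] S} (hι : Injective ι) (hπ : Surjective π) (hιπ : Exact ι π)
    (hN_dual : ∀ f : Module.Dual R N, f = 0) (hN : HasTransposeIn X N)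
    (hS : HasTransposeIn X S) : HasTransposeIn X M := by
  obtain ⟨A₀, A₁, dA, pA, _, _, hpA, hA, hAX⟩ := hN
  obtain ⟨B₀, B₁, dB, pB, _, _, hpB, hB, hBX⟩ := hS
  obtain ⟨τ, q, hq, hexact⟩ := exists_blockTriangular_presentation hι hπ hιπ hpA hA hpB hB
  refine ⟨ModuleCat.of R (A₀ × B₀), ModuleCat.of R (A₁ × B₁), blockTriangular dA τ dB, q,
    inferInstance, inferInstance, hq, hexact, ?_⟩
  exact hX.2.2.2.1 _ _ _
    (ses_dualCoker_blockTriangular τ dB (dualMap_injective_of_exact hpA hA hN_dual)) hBX hAX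

theorem IsTranspose.hasTransposeIn (hX : IsResolving R X) {M T : ModuleCat.{u} R}
    (hT : IsTranspose R M T) (hTX : T ∈ X) : HasTransposeIn X M := by
  obtain ⟨n₀, n₁, d, p, hp, hdp, -, -, ⟨e⟩⟩ := hT
  exact ⟨ModuleCat.of R (Fin n₀ → R), ModuleCat.of R (Fin n₁ → R), d, p, inferInstance,
    inferInstance, hp, LinearMap.exact_iff.mpr hdp, hX.mem_of_linearEquiv hTX e.symm⟩

theorem IsTranspose.mem_of_hasTransposeIn (hX : IsResolving R X) {M T : ModuleCat.{u} R}
    (hT : IsTranspose R M T) (hM : HasTransposeIn X M) : T ∈ X := by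
  obtain ⟨n₀, n₁, d, p, hp, hdp, hp_min, hd_min, ⟨e⟩⟩ := hT
  obtain ⟨E₀, E₁, e', q, _, _, hq, heq, hE⟩ := hM
  have hd := isSummand_dualCoker_of_minimal hp (LinearMap.exact_iff.mpr hdp) hp_min hd_min hq heq
  exact hX.mem_of_linearEquiv (hX.2.2.1 _ hE _ hd) e

end Transpose

theorem hasTransposeIn_of_isFiniteLength {R : Type u} [CommRing R] [IsLocalRing R]
    {X : Set (ModuleCat.{u} R)} (hX : IsResolving R X) (hk : HasTransposeIn X (ResidueField R))
    {r : R} (hr : r ∈ maximalIdeal R) (hreg : IsSMulRegular R r) {M : Type*} [AddCommGroup M]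
    [Module R M] (hM : IsFiniteLength R M) : HasTransposeIn X M := by
  induction hM with
  | of_subsingleton => exact hasTransposeIn_of_subsingleton hX _
  | @of_simple_quotient M _ _ N _ hN ih =>
    obtain ⟨e⟩ := IsSimpleModule.nonempty_linearEquiv_residueField (R := R) (M ⧸ N)
    exact ih.of_exact hX N.injective_subtype N.mkQ_surjective (LinearMap.exact_subtype_mkQ N)
      (dual_eq_zero_of_isFiniteLength hr hreg hN) (hk.of_linearEquiv e)

theorem transpose_finiteLength_mem_resolving_general
    (R : Type u) [CommRing R] [IsLocalRing R]
    (hdepth : 0 < mdepth R R)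
    (X : Set (ModuleCat.{u} R)) (hX : IsResolving R X)
    (htrk : ∃ T : ModuleCat.{u} R,
      IsTranspose R (ModuleCat.of R (ResidueField R)) T ∧ T ∈ X) :
    ∀ L : ModuleCat.{u} R, IsFiniteLength R ↥L →
      ∀ T : ModuleCat.{u} R, IsTranspose R L T → T ∈ X := by
  obtain ⟨r, hr, hreg⟩ := exists_isSMulRegular_mem_maximalIdeal_of_mdepth_pos hdepth
  obtain ⟨Tk, hTk, hTkX⟩ := htrk
  intro L hL T hT
  exact hT.mem_of_hasTransposeIn hX
    (hasTransposeIn_of_isFiniteLength hX (hTk.hasTransposeIn hX hTkX) hr hreg hL)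

/-- Let `(R,m,k)` be a Noetherian local ring of positive depth and `X`
a resolving subcategory of `mod R` containing the Auslander transpose `Tr k`. Then for
every finitely generated `R`-module `L` of finite length, `Tr L` belongs to `X`. -/
theorem transpose_finiteLength_mem_resolving
    (R : Type u) [CommRing R] [IsNoetherianRing R] [IsLocalRing R]
    (hdepth : 0 < mdepth R R)
    (X : Set (ModuleCat.{u} R)) (hX : IsResolving R X)
    (htrk : ∃ T : ModuleCat.{u} R,
      IsTranspose R (ModuleCat.of R (ResidueField R)) T ∧ T ∈ X) :
    ∀ L : ModuleCat.{u} R, IsFiniteLength R ↥L →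
      ∀ T : ModuleCat.{u} R, IsTranspose R L T → T ∈ X :=
  transpose_finiteLength_mem_resolving_general R hdepth X hX htrk
end
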